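/- arXiv:0803.2068 — 3 statements merged into one kernel-verified Lean document; each statement's English description precedes it below -/
import Mathlib

section
/- (Mixture representation) Let X be a zero-mean random variable and g: ℝ → ℝ a Borel function bounded from below with g(0) = 0. Then E g(X) = ∫₀^m E g(X_h) · dh / E[X_h⁺], where X_h := X_{x₊(h), x₋(h)} is a random variable with the zero-mean two-valued distribution on {x₊(h), x₋(h)}. -/
open MeasureTheory ProbabilityTheory Set Function

noncomputable section

/-- Truncated first-moment function `G`. -/
def G (μ : Measure ℝ) (x : ℝ) : ℝ :=
  if 0 ≤ x then ∫ z in Set.Ioc (0:ℝ) x, z ∂μ else ∫ z in Set.Ico x 0, -z ∂μ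

/-- `m = E X⁺`. -/
def mTot (μ : Measure ℝ) : ℝ := ∫ z in Set.Ioi (0:ℝ), z ∂μ

/-- Extension of `G` to `[-∞,∞]`. -/
def Gbar (μ : Measure ℝ) (x : EReal) : ℝ :=
  if x = ⊤ then ∫ z in Set.Ioi (0:ℝ), z ∂μ
  else if x = ⊥ then ∫ z in Set.Iio (0:ℝ), -z ∂μ
  else G μ x.toReal

/-- Positive generalized inverse `x₊`. -/
def xPlus (μ : Measure ℝ) (h : ℝ) : EReal := sInf {x : EReal | 0 ≤ x ∧ Gbar μ x ≥ h}

/-- Negative generalized inverse `x₋`. -/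
def xMinus (μ : Measure ℝ) (h : ℝ) : EReal := sSup {x : EReal | x ≤ 0 ∧ Gbar μ x ≥ h}

/-- Randomized version `G̃` of `G`. -/
def Gtilde (μ : Measure ℝ) (x u : ℝ) : ℝ :=
  if 0 ≤ x then Function.leftLim (G μ) x + (G μ x - Function.leftLim (G μ) x) * u
  else Function.rightLim (G μ) x + (G μ x - Function.rightLim (G μ) x) * u

/-- The reciprocating function `r`. -/
def recip (μ : Measure ℝ) (x u : ℝ) : EReal :=
  if 0 ≤ x then xMinus μ (Gtilde μ x u) else xPlus μ (Gtilde μ x u)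

/-- The regularizing function `x̂`. -/
def xhat (μ : Measure ℝ) (x u : ℝ) : EReal :=
  if 0 ≤ x then xPlus μ (Gtilde μ x u) else xMinus μ (Gtilde μ x u)

/-- Support of a measure on ℝ. -/
def measSupport (μ : Measure ℝ) : Set ℝ :=
  {y : ℝ | ∀ O : Set ℝ, IsOpen O → y ∈ O → 0 < μ O}

/-- `E g(X_{a,b}, R_{a,b})` for the zero-mean distribution on `{a,b}` (with `a*b ≤ 0`). -/
def twoE (g : ℝ → ℝ → ℝ) (a b : ℝ) : ℝ :=
  if a * b < 0 then (b / (b - a)) * g a b + (a / (a - b)) * g b a else g 0 0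

/-- `E g(X_{a,b})` for the zero-mean distribution on `{a,b}` (with `a*b ≤ 0`). -/
def oneE (g : ℝ → ℝ) (a b : ℝ) : ℝ :=
  if a * b < 0 then (b / (b - a)) * g a + (a / (a - b)) * g b else g 0

open Filter Topology
open scoped ENNReal NNReal

section AuxMixture

def genInv (W : EReal → ℝ) (h : ℝ) : EReal := sInf {x : EReal | 0 ≤ x ∧ W x ≥ h}

lemma genInv_mono (W : EReal → ℝ) : Monotone (genInv W) := by
  intro h1 h2 hle
  exact sInf_le_sInf (fun x hx => ⟨hx.1, le_trans hle hx.2⟩)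

lemma measurable_genInv_toReal (W : EReal → ℝ) :
    Measurable (fun h => (genInv W h).toReal) :=
  measurable_ereal_toReal.comp (genInv_mono W).measurable

variable (ν : Measure ℝ) [IsFiniteMeasure ν] (W : EReal → ℝ)

lemma Iic_tendsto_zero (hν0 : ν (Iic (0:ℝ)) = 0) :
    Tendsto (fun n : ℕ => ν (Iic (1 / (n + 1 : ℝ)))) atTop (𝓝 0) := by
  have hanti : Antitone (fun n : ℕ => Iic (1 / (n + 1 : ℝ))) := by
    intro n m hnm
    apply Iic_subset_Iic.2
    apply one_div_le_one_div_of_le (by positivity)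
    have : (n:ℝ) ≤ m := Nat.cast_le.2 hnm
    linarith
  have hInt : ⋂ n : ℕ, Iic (1 / (n + 1 : ℝ)) = Iic (0:ℝ) := by
    ext x
    simp only [mem_iInter, mem_Iic]
    constructor
    · intro hx
      by_contra hx0
      push_neg at hx0
      obtain ⟨n, hn⟩ := exists_nat_one_div_lt hx0
      exact absurd (hx n) (by push_neg; exact_mod_cast hn)
    · intro hx n
      exact le_trans hx (by positivity)
  have := tendsto_measure_iInter_atTop (μ := ν)
    (fun n => (measurableSet_Iic).nullMeasurableSet) hanti ⟨0, measure_ne_top _ _⟩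
  rw [hInt, hν0] at this
  exact this

lemma genInv_pos (hν0 : ν (Iic (0:ℝ)) = 0)
    (hW : ∀ r : ℝ, 0 ≤ r → W (r : EReal) = (ν (Iic r)).toReal)
    {h : ℝ} (hh : 0 < h) : (0 : EReal) < genInv W h := by
  have h1 : (0:ℝ≥0∞) < ENNReal.ofReal h := ENNReal.ofReal_pos.2 hh
  obtain ⟨n, hn⟩ := ((Iic_tendsto_zero ν hν0).eventually_lt_const h1).exists
  set ε : ℝ := 1 / (n + 1 : ℝ) with hε
  have hεpos : 0 < ε := by positivity
  have hlb : ∀ x ∈ {x : EReal | 0 ≤ x ∧ W x ≥ h}, (ε : EReal) ≤ x := by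
    rintro x ⟨hx0, hxW⟩
    by_contra hlt
    push_neg at hlt
    have hxbot : x ≠ ⊥ := fun hb => by simp [hb] at hx0
    have hxtop : x ≠ ⊤ := fun ht => by
      rw [ht] at hlt; exact absurd hlt (not_lt.2 le_top)
    have hxeq : ((x.toReal : ℝ) : EReal) = x := EReal.coe_toReal hxtop hxbot
    have hxr : (0:ℝ) ≤ x.toReal := by
      have := EReal.toReal_le_toReal hx0 (by simp) hxtop
      simpa using this
    have hxlt : x.toReal < ε := by
      rw [← hxeq] at hlt; exact_mod_cast hlt
    have hWx : W x = (ν (Iic x.toReal)).toReal := by rw [← hxeq]; exact hW _ hxr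
    have : ENNReal.ofReal h ≤ ν (Iic x.toReal) := by
      apply ENNReal.ofReal_le_of_le_toReal
      rw [← hWx]; exact hxW
    have hc : ν (Iic x.toReal) ≤ ν (Iic ε) := measure_mono (Iic_subset_Iic.2 hxlt.le)
    exact absurd (lt_of_le_of_lt (this.trans hc) hn) (lt_irrefl _)
  calc (0 : EReal) < (ε : EReal) := by exact_mod_cast hεpos
    _ ≤ genInv W h := le_sInf hlb

lemma genInv_lt_top (hW : ∀ r : ℝ, 0 ≤ r → W (r : EReal) = (ν (Iic r)).toReal)
    {h : ℝ} (hh0 : 0 < h) (hh : h < (ν univ).toReal) : genInv W h < ⊤ := by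
  have htend : Tendsto (fun n : ℕ => ν (Iic (n:ℝ))) atTop (𝓝 (ν univ)) := by
    have hmono : Monotone (fun n : ℕ => Iic (n:ℝ)) := fun n m hnm =>
      Iic_subset_Iic.2 (Nat.cast_le.2 hnm)
    have hU : ⋃ n : ℕ, Iic (n:ℝ) = univ := by
      ext x; simp only [mem_iUnion, mem_Iic, mem_univ, iff_true]
      obtain ⟨n, hn⟩ := exists_nat_ge x
      exact ⟨n, hn⟩
    have := tendsto_measure_iUnion_atTop (μ := ν) hmono
    rwa [hU] at this
  have hlt : ENNReal.ofReal h < ν univ :=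
    (ENNReal.ofReal_lt_iff_lt_toReal hh0.le (measure_ne_top _ _)).2 hh
  obtain ⟨n, hn⟩ := (htend.eventually_const_lt hlt).exists
  have hmem : ((n:ℝ) : EReal) ∈ {x : EReal | 0 ≤ x ∧ W x ≥ h} := by
    refine ⟨by exact_mod_cast Nat.cast_nonneg (α := ℝ) n, ?_⟩
    rw [hW _ (Nat.cast_nonneg n)]
    exact le_of_lt ((ENNReal.ofReal_lt_iff_lt_toReal hh0.le (measure_ne_top _ _)).1 hn)
  calc genInv W h ≤ ((n:ℝ) : EReal) := sInf_le hmem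
    _ < ⊤ := EReal.coe_lt_top _

lemma genInv_le_iff (hW : ∀ r : ℝ, 0 ≤ r → W (r : EReal) = (ν (Iic r)).toReal)
    {h : ℝ} (hh0 : 0 < h) {r : ℝ} (hr : 0 ≤ r) :
    genInv W h ≤ (r : EReal) ↔ ENNReal.ofReal h ≤ ν (Iic r) := by
  constructor
  · intro hle
    have hbound : ∀ n : ℕ, ENNReal.ofReal h ≤ ν (Iic (r + 1 / (n + 1 : ℝ))) := by
      intro n
      have hlt : genInv W h < ((r + 1 / (n + 1 : ℝ)) : EReal) := by
        exact lt_of_le_of_lt hle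
          (EReal.coe_lt_coe_iff.2 (lt_add_of_pos_right r (by positivity)))
      obtain ⟨x, hx, hxlt⟩ := sInf_lt_iff.1 hlt
      have hxbot : x ≠ ⊥ := fun hb => by simpa [hb] using hx.1
      have hxtop : x ≠ ⊤ := fun ht => by
        rw [ht] at hxlt; exact absurd hxlt (not_lt.2 le_top)
      have hxeq : ((x.toReal : ℝ) : EReal) = x := EReal.coe_toReal hxtop hxbot
      have hxr : (0:ℝ) ≤ x.toReal := by
        have := EReal.toReal_le_toReal hx.1 (by simp) hxtop
        simpa using this
      have hxlt' : x.toReal ≤ r + 1 / (n + 1 : ℝ) := by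
        rw [← hxeq] at hxlt
        exact le_of_lt (EReal.coe_lt_coe_iff.1 hxlt)
      have hWx : h ≤ (ν (Iic x.toReal)).toReal := by
        rw [← hW _ hxr, hxeq]; exact hx.2
      exact le_trans (ENNReal.ofReal_le_of_le_toReal hWx)
        (measure_mono (Iic_subset_Iic.2 hxlt'))
    have htend : Tendsto (fun n : ℕ => ν (Iic (r + 1 / (n + 1 : ℝ)))) atTop (𝓝 (ν (Iic r))) := by
      have hanti : Antitone (fun n : ℕ => Iic (r + 1 / (n + 1 : ℝ))) := by
        intro n m hnm
        apply Iic_subset_Iic.2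
        have : (n:ℝ) ≤ m := Nat.cast_le.2 hnm
        have : 1 / (m + 1 : ℝ) ≤ 1 / (n + 1 : ℝ) :=
          one_div_le_one_div_of_le (by positivity) (by linarith)
        linarith
      have hInt : ⋂ n : ℕ, Iic (r + 1 / (n + 1 : ℝ)) = Iic r := by
        ext x
        simp only [mem_iInter, mem_Iic]
        constructor
        · intro hx
          by_contra hx0
          push_neg at hx0
          obtain ⟨n, hn⟩ := exists_nat_one_div_lt (sub_pos.2 hx0)
          exact absurd (hx n) (by push_neg; linarith)
        · intro hx n
          have : (0:ℝ) < 1 / (n + 1 : ℝ) := by positivity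
          linarith
      have := tendsto_measure_iInter_atTop (μ := ν)
        (fun n => (measurableSet_Iic).nullMeasurableSet) hanti ⟨0, measure_ne_top _ _⟩
      rwa [hInt] at this
    exact ge_of_tendsto' htend hbound
  · intro hle
    apply sInf_le
    refine ⟨by exact_mod_cast hr, ?_⟩
    rw [hW _ hr]
    exact (ENNReal.ofReal_le_iff_le_toReal (measure_ne_top _ _)).1 hle

lemma genInv_toReal_pos (hν0 : ν (Iic (0:ℝ)) = 0)
    (hW : ∀ r : ℝ, 0 ≤ r → W (r : EReal) = (ν (Iic r)).toReal)
    {h : ℝ} (hh : h ∈ Ioo (0:ℝ) ((ν univ).toReal)) : 0 < (genInv W h).toReal := by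
  have h1 := genInv_pos ν W hν0 hW hh.1
  have h2 := genInv_lt_top ν W hW hh.1 hh.2
  have hbot : genInv W h ≠ ⊥ := fun hb => by rw [hb] at h1; exact absurd h1 (by simp)
  have heq : (((genInv W h).toReal : ℝ) : EReal) = genInv W h := EReal.coe_toReal h2.ne hbot
  rw [← heq] at h1
  exact_mod_cast h1

lemma genInv_toReal_le_iff (hν0 : ν (Iic (0:ℝ)) = 0)
    (hW : ∀ r : ℝ, 0 ≤ r → W (r : EReal) = (ν (Iic r)).toReal)
    {h : ℝ} (hh : h ∈ Ioo (0:ℝ) ((ν univ).toReal)) {r : ℝ} (hr : 0 ≤ r) :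
    (genInv W h).toReal ≤ r ↔ h ≤ (ν (Iic r)).toReal := by
  have h1 := genInv_pos ν W hν0 hW hh.1
  have h2 := genInv_lt_top ν W hW hh.1 hh.2
  have hbot : genInv W h ≠ ⊥ := fun hb => by rw [hb] at h1; exact absurd h1 (by simp)
  have heq : (((genInv W h).toReal : ℝ) : EReal) = genInv W h := EReal.coe_toReal h2.ne hbot
  have step : (genInv W h).toReal ≤ r ↔ genInv W h ≤ (r : EReal) := by
    rw [← heq]; exact_mod_cast Iff.rfl
  rw [step, genInv_le_iff ν W hW hh.1 hr,
    ENNReal.ofReal_le_iff_le_toReal (measure_ne_top _ _)]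

lemma genInv_map (hν0 : ν (Iic (0:ℝ)) = 0)
    (hW : ∀ r : ℝ, 0 ≤ r → W (r : EReal) = (ν (Iic r)).toReal) :
    Measure.map (fun h => (genInv W h).toReal)
      (volume.restrict (Ioo (0:ℝ) ((ν univ).toReal))) = ν := by
  set M := (ν univ).toReal with hM
  have hMnn : 0 ≤ M := ENNReal.toReal_nonneg
  have hφ : Measurable (fun h => (genInv W h).toReal) := measurable_genInv_toReal W
  haveI : IsFiniteMeasure (Measure.map (fun h => (genInv W h).toReal)
      (volume.restrict (Ioo (0:ℝ) M))) := by
    constructor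
    rw [Measure.map_apply hφ MeasurableSet.univ, preimage_univ, Measure.restrict_apply_univ,
      Real.volume_Ioo]
    exact ENNReal.ofReal_lt_top
  refine Measure.ext_of_Iic _ ν (fun r => ?_)
  rw [Measure.map_apply hφ measurableSet_Iic, Measure.restrict_apply (hφ measurableSet_Iic)]
  rcases lt_or_ge r 0 with hr | hr
  · have hempty : (fun h => (genInv W h).toReal) ⁻¹' Iic r ∩ Ioo (0:ℝ) M = ∅ := by
      ext h
      simp only [mem_inter_iff, mem_preimage, mem_Iic, mem_empty_iff_false, iff_false, not_and]
      intro hle hIoo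
      exact absurd (lt_of_le_of_lt (le_trans (genInv_toReal_pos ν W hν0 hW hIoo).le hle) hr)
        (lt_irrefl _)
    rw [hempty]
    have : ν (Iic r) = 0 :=
      le_antisymm (le_trans (measure_mono (Iic_subset_Iic.2 hr.le)) (le_of_eq hν0)) zero_le
    simp [this]
  · set c := (ν (Iic r)).toReal with hc
    have hcnn : 0 ≤ c := ENNReal.toReal_nonneg
    have hcM : c ≤ M := ENNReal.toReal_mono (measure_ne_top _ _) (measure_mono (subset_univ _))
    have hset : (fun h => (genInv W h).toReal) ⁻¹' Iic r ∩ Ioo (0:ℝ) M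
        = Ioo (0:ℝ) M ∩ Iic c := by
      ext h
      simp only [mem_inter_iff, mem_preimage, mem_Iic, mem_Ioo]
      constructor
      · rintro ⟨h1, h2⟩
        exact ⟨h2, (genInv_toReal_le_iff ν W hν0 hW h2 hr).1 h1⟩
      · rintro ⟨h2, h1⟩
        exact ⟨(genInv_toReal_le_iff ν W hν0 hW h2 hr).2 h1, h2⟩
    rw [hset]
    have hvol : volume (Ioo (0:ℝ) M ∩ Iic c) = ENNReal.ofReal c := by
      rcases lt_or_eq_of_le hcM with hlt | heq
      · have : Ioo (0:ℝ) M ∩ Iic c = Ioc (0:ℝ) c := by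
          ext h
          simp only [mem_inter_iff, mem_Ioo, mem_Iic, mem_Ioc]
          constructor
          · rintro ⟨⟨a, b⟩, d⟩; exact ⟨a, d⟩
          · rintro ⟨a, d⟩; exact ⟨⟨a, lt_of_le_of_lt d hlt⟩, d⟩
        rw [this, Real.volume_Ioc, sub_zero]
      · have : Ioo (0:ℝ) M ∩ Iic c = Ioo (0:ℝ) M := by
          rw [inter_eq_left]
          intro h hmem
          exact le_of_lt (heq ▸ hmem.2)
        rw [this, Real.volume_Ioo, sub_zero, heq]
    rw [hvol, hc, ENNReal.ofReal_toReal (measure_ne_top _ _)]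


lemma ereal_sSup_neg (B : Set EReal) : sSup ((fun x : EReal => -x) '' B) = - sInf B := by
  apply le_antisymm
  · apply sSup_le
    rintro y ⟨x, hx, rfl⟩
    exact EReal.neg_le_neg_iff.2 (sInf_le hx)
  · rw [EReal.neg_le]
    apply le_sInf
    intro x hx
    rw [EReal.neg_le]
    exact le_sSup ⟨x, hx, rfl⟩

lemma xPlus_eq_genInv (μ : Measure ℝ) : xPlus μ = genInv (Gbar μ) := rfl

lemma xMinus_eq_neg_genInv (μ : Measure ℝ) (h : ℝ) :
    xMinus μ h = - genInv (fun y => Gbar μ (-y)) h := by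
  rw [xMinus, genInv, ← ereal_sSup_neg]
  congr 1
  ext x
  simp only [mem_image, mem_setOf_eq]
  constructor
  · rintro ⟨hx0, hxW⟩
    exact ⟨-x, ⟨by simpa using EReal.neg_le_neg_iff.2 hx0, by rwa [neg_neg]⟩, neg_neg x⟩
  · rintro ⟨y, ⟨hy0, hyW⟩, rfl⟩
    exact ⟨by simpa using EReal.neg_le_neg_iff.2 hy0, hyW⟩

def dPos : ℝ → ℝ≥0∞ := fun x => ENNReal.ofReal ((Ioi (0:ℝ)).indicator id x)
def dNeg : ℝ → ℝ≥0∞ := fun x => ENNReal.ofReal ((Iio (0:ℝ)).indicator (fun z => -z) x)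

lemma dPos_meas : Measurable dPos :=
  ENNReal.measurable_ofReal.comp (measurable_id.indicator measurableSet_Ioi)

lemma dNeg_meas : Measurable dNeg :=
  ENNReal.measurable_ofReal.comp (measurable_neg.indicator measurableSet_Iio)

def nuPos (μ : Measure ℝ) : Measure ℝ := μ.withDensity dPos
def nuNeg (μ : Measure ℝ) : Measure ℝ := μ.withDensity dNeg
def nuNegM (μ : Measure ℝ) : Measure ℝ := Measure.map Neg.neg (nuNeg μ)

variable (μ : Measure ℝ) [IsProbabilityMeasure μ]

lemma nuPos_apply (hint : Integrable (id : ℝ → ℝ) μ) {s : Set ℝ} (hs : MeasurableSet s) :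
    nuPos μ s = ENNReal.ofReal (∫ x in s, (Ioi (0:ℝ)).indicator id x ∂μ) := by
  rw [nuPos, withDensity_apply _ hs]
  simp only [dPos]
  rw [← ofReal_integral_eq_lintegral_ofReal ((hint.indicator measurableSet_Ioi).restrict)
      (ae_of_all _ (fun x => indicator_nonneg (fun y hy => le_of_lt hy) x))]

lemma nuNeg_apply (hint : Integrable (id : ℝ → ℝ) μ) {s : Set ℝ} (hs : MeasurableSet s) :
    nuNeg μ s = ENNReal.ofReal (∫ x in s, (Iio (0:ℝ)).indicator (fun z => -z) x ∂μ) := by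
  rw [nuNeg, withDensity_apply _ hs]
  simp only [dNeg]
  have hi : Integrable ((Iio (0:ℝ)).indicator (fun z => -z)) (μ.restrict s) :=
    ((hint.neg).indicator measurableSet_Iio).restrict
  rw [← ofReal_integral_eq_lintegral_ofReal hi
      (ae_of_all _ (fun x => indicator_nonneg (fun y hy => by simp; exact le_of_lt hy) x))]

lemma G_nonneg {r : ℝ} (hr : 0 ≤ r) : 0 ≤ G μ r := by
  rw [G, if_pos hr]
  exact setIntegral_nonneg measurableSet_Ioc (fun x hx => le_of_lt hx.1)

lemma nuPos_Iic (hint : Integrable (id : ℝ → ℝ) μ) {r : ℝ} (hr : 0 ≤ r) :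
    nuPos μ (Iic r) = ENNReal.ofReal (G μ r) := by
  rw [nuPos_apply μ hint measurableSet_Iic, setIntegral_indicator measurableSet_Ioi]
  congr 1
  rw [G, if_pos hr]
  congr 1
  rw [inter_comm, Ioi_inter_Iic]

lemma nuPos_Iic_zero (hint : Integrable (id : ℝ → ℝ) μ) : nuPos μ (Iic (0:ℝ)) = 0 := by
  rw [nuPos_Iic μ hint le_rfl]
  have : G μ 0 = 0 := by simp [G]
  simp [this]

lemma mTot_nonneg : 0 ≤ mTot μ :=
  setIntegral_nonneg measurableSet_Ioi (fun x hx => le_of_lt hx)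

lemma nuPos_univ (hint : Integrable (id : ℝ → ℝ) μ) :
    nuPos μ univ = ENNReal.ofReal (mTot μ) := by
  rw [nuPos_apply μ hint MeasurableSet.univ, Measure.restrict_univ,
    integral_indicator measurableSet_Ioi]
  rfl

lemma hW_pos (hint : Integrable (id : ℝ → ℝ) μ) :
    ∀ r : ℝ, 0 ≤ r → Gbar μ (r : EReal) = (nuPos μ (Iic r)).toReal := by
  intro r hr
  rw [Gbar, if_neg (EReal.coe_ne_top r), if_neg (EReal.coe_ne_bot r), EReal.toReal_coe,
    nuPos_Iic μ hint hr, ENNReal.toReal_ofReal (G_nonneg μ hr)]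

-- negative side
lemma nuNegM_Iic (hint : Integrable (id : ℝ → ℝ) μ) (r : ℝ) :
    nuNegM μ (Iic r) = ENNReal.ofReal (∫ z in Ico (-r) (0:ℝ), -z ∂μ) := by
  rw [nuNegM, Measure.map_apply measurable_neg measurableSet_Iic]
  have hpre : (Neg.neg : ℝ → ℝ) ⁻¹' Iic r = Ici (-r) := by
    ext x; simp only [mem_preimage, mem_Iic, mem_Ici]; exact neg_le
  rw [hpre, nuNeg_apply μ hint measurableSet_Ici, setIntegral_indicator measurableSet_Iio,
    Ici_inter_Iio]

lemma G_neg (hint : Integrable (id : ℝ → ℝ) μ) {r : ℝ} (hr : 0 ≤ r) :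
    G μ (-r) = ∫ z in Ico (-r) (0:ℝ), -z ∂μ := by
  rcases eq_or_lt_of_le hr with heq | hlt
  · rw [← heq]
    simp [G]
  · rw [G, if_neg (by linarith)]

lemma G_neg_nonneg (hint : Integrable (id : ℝ → ℝ) μ) {r : ℝ} (hr : 0 ≤ r) :
    0 ≤ G μ (-r) := by
  rw [G_neg μ hint hr]
  exact setIntegral_nonneg measurableSet_Ico (fun x hx => by simp; exact le_of_lt hx.2)

lemma hW_neg (hint : Integrable (id : ℝ → ℝ) μ) :
    ∀ r : ℝ, 0 ≤ r → (fun y => Gbar μ (-y)) (r : EReal) = (nuNegM μ (Iic r)).toReal := by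
  intro r hr
  have hc : -(r : EReal) = ((-r : ℝ) : EReal) := by rw [EReal.coe_neg]
  simp only [hc]
  rw [Gbar, if_neg (EReal.coe_ne_top _), if_neg (EReal.coe_ne_bot _), EReal.toReal_coe,
    nuNegM_Iic μ hint r, ← G_neg μ hint hr, ENNReal.toReal_ofReal (G_neg_nonneg μ hint hr)]

lemma nuNegM_Iic_zero (hint : Integrable (id : ℝ → ℝ) μ) : nuNegM μ (Iic (0:ℝ)) = 0 := by
  rw [nuNegM_Iic μ hint 0]
  simp

lemma nuNegM_univ (hint : Integrable (id : ℝ → ℝ) μ) :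
    nuNegM μ univ = ENNReal.ofReal (∫ z in Iio (0:ℝ), -z ∂μ) := by
  rw [nuNegM, Measure.map_apply measurable_neg MeasurableSet.univ, preimage_univ,
    nuNeg_apply μ hint MeasurableSet.univ, Measure.restrict_univ,
    integral_indicator measurableSet_Iio]

lemma integral_Ici_zero (hint : Integrable (id : ℝ → ℝ) μ) :
    ∫ x in Ici (0:ℝ), x ∂μ = mTot μ := by
  have hsplit : Ici (0:ℝ) = {0} ∪ Ioi 0 := by
    ext x; simp only [mem_Ici, mem_union, mem_singleton_iff, mem_Ioi]
    constructor
    · intro hx; rcases eq_or_lt_of_le hx with h | h; · exact Or.inl h.symm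
      · exact Or.inr h
    · rintro (rfl | hx); · exact le_rfl
      · exact hx.le
  rw [hsplit, setIntegral_union (f := fun x : ℝ => x) (by simp) measurableSet_Ioi
    (hint.integrableOn) (hint.integrableOn)]
  have h0 : ∫ x in ({0} : Set ℝ), x ∂μ = 0 := by
    rw [setIntegral_congr_fun (measurableSet_singleton 0) (fun x hx => hx)]
    · simp
  rw [h0, zero_add]
  rfl

lemma mNeg_eq (hint : Integrable (id : ℝ → ℝ) μ) (hmean : ∫ x, x ∂μ = 0) :
    ∫ z in Iio (0:ℝ), -z ∂μ = mTot μ := by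
  have hsplit : ∫ x in Iio (0:ℝ), x ∂μ + ∫ x in Ici (0:ℝ), x ∂μ = ∫ x, x ∂μ :=
    intervalIntegral.integral_Iio_add_Ici (hint.integrableOn) (hint.integrableOn)
  rw [hmean, integral_Ici_zero μ hint] at hsplit
  rw [integral_neg]
  linarith

lemma mTot_pos (hint : Integrable (id : ℝ → ℝ) μ) (hmean : ∫ x, x ∂μ = 0)
    (habs : 0 < ∫ x, |x| ∂μ) : 0 < mTot μ := by
  have h1 : ∫ x in Iio (0:ℝ), |x| ∂μ = ∫ z in Iio (0:ℝ), -z ∂μ :=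
    setIntegral_congr_fun measurableSet_Iio (fun x hx => abs_of_neg hx)
  have h2 : ∫ x in Ici (0:ℝ), |x| ∂μ = ∫ x in Ici (0:ℝ), x ∂μ :=
    setIntegral_congr_fun measurableSet_Ici (fun x hx => abs_of_nonneg hx)
  have hsplit : ∫ x in Iio (0:ℝ), |x| ∂μ + ∫ x in Ici (0:ℝ), |x| ∂μ = ∫ x, |x| ∂μ :=
    intervalIntegral.integral_Iio_add_Ici (hint.abs.integrableOn) (hint.abs.integrableOn)
  rw [h1, h2, mNeg_eq μ hint hmean, integral_Ici_zero μ hint] at hsplit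
  linarith

lemma nuPos_univ_toReal (hint : Integrable (id : ℝ → ℝ) μ) :
    (nuPos μ univ).toReal = mTot μ := by
  rw [nuPos_univ μ hint, ENNReal.toReal_ofReal (mTot_nonneg μ)]

lemma nuNegM_univ_toReal (hint : Integrable (id : ℝ → ℝ) μ) (hmean : ∫ x, x ∂μ = 0) :
    (nuNegM μ univ).toReal = mTot μ := by
  rw [nuNegM_univ μ hint, mNeg_eq μ hint hmean, ENNReal.toReal_ofReal (mTot_nonneg μ)]

lemma nuPos_finite (hint : Integrable (id : ℝ → ℝ) μ) : IsFiniteMeasure (nuPos μ) :=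
  ⟨by rw [nuPos_univ μ hint]; exact ENNReal.ofReal_lt_top⟩

lemma nuNegM_finite (hint : Integrable (id : ℝ → ℝ) μ) : IsFiniteMeasure (nuNegM μ) :=
  ⟨by rw [nuNegM_univ μ hint]; exact ENNReal.ofReal_lt_top⟩

lemma mapA (hint : Integrable (id : ℝ → ℝ) μ) :
    Measure.map (fun h => (xPlus μ h).toReal) (volume.restrict (Ioo (0:ℝ) (mTot μ)))
      = nuPos μ := by
  haveI := nuPos_finite μ hint
  have h1 := genInv_map (nuPos μ) (Gbar μ) (nuPos_Iic_zero μ hint) (hW_pos μ hint)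
  rw [nuPos_univ_toReal μ hint] at h1
  rw [xPlus_eq_genInv]
  exact h1

lemma xPlus_toReal_pos (hint : Integrable (id : ℝ → ℝ) μ) {h : ℝ}
    (hh : h ∈ Ioo (0:ℝ) (mTot μ)) : 0 < (xPlus μ h).toReal := by
  haveI := nuPos_finite μ hint
  rw [xPlus_eq_genInv]
  exact genInv_toReal_pos (nuPos μ) (Gbar μ) (nuPos_Iic_zero μ hint) (hW_pos μ hint)
    (by rwa [nuPos_univ_toReal μ hint])

lemma xMinus_toReal_eq (h : ℝ) :
    (xMinus μ h).toReal = - (genInv (fun y => Gbar μ (-y)) h).toReal := by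
  rw [xMinus_eq_neg_genInv, EReal.toReal_neg_eq]

lemma xMinus_toReal_neg (hint : Integrable (id : ℝ → ℝ) μ) (hmean : ∫ x, x ∂μ = 0) {h : ℝ}
    (hh : h ∈ Ioo (0:ℝ) (mTot μ)) : (xMinus μ h).toReal < 0 := by
  haveI := nuNegM_finite μ hint
  rw [xMinus_toReal_eq, neg_lt_zero]
  exact genInv_toReal_pos (nuNegM μ) (fun y => Gbar μ (-y)) (nuNegM_Iic_zero μ hint) (hW_neg μ hint)
    (by rwa [nuNegM_univ_toReal μ hint hmean])

lemma measurable_A : Measurable (fun h => (xPlus μ h).toReal) := by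
  rw [xPlus_eq_genInv]; exact measurable_genInv_toReal _

lemma measurable_B : Measurable (fun h => (xMinus μ h).toReal) := by
  have : (fun h => (xMinus μ h).toReal)
      = fun h => - (genInv (fun y => Gbar μ (-y)) h).toReal := by
    funext h; exact xMinus_toReal_eq μ h
  rw [this]
  exact (measurable_genInv_toReal _).neg

lemma mapB (hint : Integrable (id : ℝ → ℝ) μ) (hmean : ∫ x, x ∂μ = 0) :
    Measure.map (fun h => (xMinus μ h).toReal) (volume.restrict (Ioo (0:ℝ) (mTot μ)))
      = nuNeg μ := by
  haveI := nuNegM_finite μ hint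
  have h1 := genInv_map (nuNegM μ) (fun y => Gbar μ (-y)) (nuNegM_Iic_zero μ hint) (hW_neg μ hint)
  rw [nuNegM_univ_toReal μ hint hmean] at h1
  have h2 : (fun h => (xMinus μ h).toReal)
      = (Neg.neg ∘ fun h => (genInv (fun y => Gbar μ (-y)) h).toReal) := by
    funext h; exact xMinus_toReal_eq μ h
  rw [h2, ← Measure.map_map measurable_neg (measurable_genInv_toReal _), h1, nuNegM,
    Measure.map_map measurable_neg measurable_neg]
  have h3 : (Neg.neg ∘ Neg.neg : ℝ → ℝ) = id := by funext x; simp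
  rw [h3, Measure.map_id]

lemma SP (hint : Integrable (id : ℝ → ℝ) μ) {f : ℝ → ℝ} (hf : Measurable f)
    (hfnn : ∀ x, 0 ≤ f x) :
    ∫⁻ h in Ioo (0:ℝ) (mTot μ), ENNReal.ofReal (f ((xPlus μ h).toReal) / (xPlus μ h).toReal)
      = ∫⁻ x in Ioi (0:ℝ), ENNReal.ofReal (f x) ∂μ := by
  have hF : Measurable (fun x : ℝ => ENNReal.ofReal (f x / x)) :=
    (hf.div measurable_id).ennreal_ofReal
  have step1 : ∫⁻ h in Ioo (0:ℝ) (mTot μ),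
      ENNReal.ofReal (f ((xPlus μ h).toReal) / (xPlus μ h).toReal)
      = ∫⁻ x, ENNReal.ofReal (f x / x) ∂(nuPos μ) := by
    rw [← mapA μ hint, lintegral_map hF (measurable_A μ)]
  rw [step1, nuPos, lintegral_withDensity_eq_lintegral_mul μ dPos_meas hF]
  have hptwise : (dPos * fun x : ℝ => ENNReal.ofReal (f x / x))
      = (Ioi (0:ℝ)).indicator (fun x => ENNReal.ofReal (f x)) := by
    funext x
    simp only [Pi.mul_apply, dPos]
    rcases lt_or_ge 0 x with hx | hx
    · rw [indicator_of_mem (mem_Ioi.2 hx), indicator_of_mem (mem_Ioi.2 hx)]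
      simp only [id_eq]
      rw [← ENNReal.ofReal_mul (le_of_lt hx), mul_comm x (f x / x),
        div_mul_cancel₀ _ (ne_of_gt hx)]
    · rw [indicator_of_notMem (by simp only [mem_Ioi, not_lt]; exact hx),
        indicator_of_notMem (by simp only [mem_Ioi, not_lt]; exact hx)]
      simp
  rw [hptwise, lintegral_indicator measurableSet_Ioi]

lemma SN (hint : Integrable (id : ℝ → ℝ) μ) (hmean : ∫ x, x ∂μ = 0) {f : ℝ → ℝ}
    (hf : Measurable f) (hfnn : ∀ x, 0 ≤ f x) :
    ∫⁻ h in Ioo (0:ℝ) (mTot μ),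
        ENNReal.ofReal (f ((xMinus μ h).toReal) / (-(xMinus μ h).toReal))
      = ∫⁻ x in Iio (0:ℝ), ENNReal.ofReal (f x) ∂μ := by
  have hF : Measurable (fun x : ℝ => ENNReal.ofReal (f x / (-x))) :=
    (hf.div measurable_id.neg).ennreal_ofReal
  have step1 : ∫⁻ h in Ioo (0:ℝ) (mTot μ),
      ENNReal.ofReal (f ((xMinus μ h).toReal) / (-(xMinus μ h).toReal))
      = ∫⁻ x, ENNReal.ofReal (f x / (-x)) ∂(nuNeg μ) := by
    rw [← mapB μ hint hmean, lintegral_map hF (measurable_B μ)]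
  rw [step1, nuNeg, lintegral_withDensity_eq_lintegral_mul μ dNeg_meas hF]
  have hptwise : (dNeg * fun x : ℝ => ENNReal.ofReal (f x / (-x)))
      = (Iio (0:ℝ)).indicator (fun x => ENNReal.ofReal (f x)) := by
    funext x
    simp only [Pi.mul_apply, dNeg]
    rcases lt_or_ge x 0 with hx | hx
    · rw [indicator_of_mem (mem_Iio.2 hx), indicator_of_mem (mem_Iio.2 hx)]
      have hnx : (0:ℝ) < -x := by linarith
      rw [← ENNReal.ofReal_mul (le_of_lt hnx), mul_comm (-x) (f x / -x),
        div_mul_cancel₀ _ (ne_of_gt hnx)]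
    · rw [indicator_of_notMem (by simp only [mem_Iio, not_lt]; exact hx),
        indicator_of_notMem (by simp only [mem_Iio, not_lt]; exact hx)]
      simp
  rw [hptwise, lintegral_indicator measurableSet_Iio]

lemma TT {f : ℝ → ℝ} (hf0 : f 0 = 0) :
    ∫⁻ x in Ioi (0:ℝ), ENNReal.ofReal (f x) ∂μ + ∫⁻ x in Iio (0:ℝ), ENNReal.ofReal (f x) ∂μ
      = ∫⁻ x, ENNReal.ofReal (f x) ∂μ := by
  have hcompl : ∫⁻ x in Iio (0:ℝ), ENNReal.ofReal (f x) ∂μ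
      + ∫⁻ x in (Iio (0:ℝ))ᶜ, ENNReal.ofReal (f x) ∂μ = ∫⁻ x, ENNReal.ofReal (f x) ∂μ :=
    lintegral_add_compl _ measurableSet_Iio
  rw [compl_Iio] at hcompl
  have hIci : ∫⁻ x in Ici (0:ℝ), ENNReal.ofReal (f x) ∂μ
      = ∫⁻ x in Ioi (0:ℝ), ENNReal.ofReal (f x) ∂μ := by
    have hsplit : Ici (0:ℝ) = Ioi 0 ∪ {0} := by
      ext x; simp only [mem_Ici, mem_union, mem_Ioi, mem_singleton_iff]
      constructor
      · intro hx; rcases eq_or_lt_of_le hx with h | h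
        · exact Or.inr h.symm
        · exact Or.inl h
      · rintro (hx | rfl); · exact hx.le
        · exact le_rfl
    rw [hsplit, lintegral_union (measurableSet_singleton 0) (by simp)]
    have h0 : ∫⁻ x in ({0} : Set ℝ), ENNReal.ofReal (f x) ∂μ = 0 := by
      rw [setLIntegral_congr_fun (measurableSet_singleton 0)
        ((fun x hx => by
          rw [mem_singleton_iff] at hx
          rw [hx, hf0, ENNReal.ofReal_zero] : ∀ x ∈ ({0}:Set ℝ),
          ENNReal.ofReal (f x) = 0))]
      simp
    rw [h0, add_zero]
  rw [← hcompl, hIci, add_comm]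

lemma star (hint : Integrable (id : ℝ → ℝ) μ) (hmean : ∫ x, x ∂μ = 0) {f : ℝ → ℝ}
    (hf : Measurable f) (hfnn : ∀ x, 0 ≤ f x) (hf0 : f 0 = 0) :
    ∫⁻ h in Ioo (0:ℝ) (mTot μ),
        ENNReal.ofReal (f ((xPlus μ h).toReal) / (xPlus μ h).toReal
          + f ((xMinus μ h).toReal) / (-(xMinus μ h).toReal))
      = ∫⁻ x, ENNReal.ofReal (f x) ∂μ := by
  have hsplit : ∀ h ∈ Ioo (0:ℝ) (mTot μ),
      ENNReal.ofReal (f ((xPlus μ h).toReal) / (xPlus μ h).toReal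
          + f ((xMinus μ h).toReal) / (-(xMinus μ h).toReal))
        = ENNReal.ofReal (f ((xPlus μ h).toReal) / (xPlus μ h).toReal)
          + ENNReal.ofReal (f ((xMinus μ h).toReal) / (-(xMinus μ h).toReal)) := by
    intro h hh
    exact ENNReal.ofReal_add
      (div_nonneg (hfnn _) (xPlus_toReal_pos μ hint hh).le)
      (div_nonneg (hfnn _) (by linarith [xMinus_toReal_neg μ hint hmean hh]))
  have hmeas1 : Measurable (fun h : ℝ =>
      ENNReal.ofReal (f ((xPlus μ h).toReal) / (xPlus μ h).toReal)) :=
    ((hf.comp (measurable_A μ)).div (measurable_A μ)).ennreal_ofReal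
  rw [setLIntegral_congr_fun measurableSet_Ioo hsplit,
    lintegral_add_left hmeas1,
    SP μ hint hf hfnn, SN μ hint hmean hf hfnn, TT μ hf0]


def Ifun (μ : Measure ℝ) (f : ℝ → ℝ) : ℝ → ℝ :=
  fun h => f ((xPlus μ h).toReal) / (xPlus μ h).toReal
    + f ((xMinus μ h).toReal) / (-(xMinus μ h).toReal)

lemma Ifun_meas (f : ℝ → ℝ) (hf : Measurable f) : Measurable (Ifun μ f) :=
  ((hf.comp (measurable_A μ)).div (measurable_A μ)).add
    ((hf.comp (measurable_B μ)).div (measurable_B μ).neg)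


end AuxMixture

/-- Mixture representation: for Borel `g` bounded from below with `g(0) = 0`,
`E g(X) = ∫₀^m E g(X_h) dh / E X_h⁺`, where `X_h` has the zero-mean distribution on
`{x₊(h), x₋(h)}` and `E X_h⁺ = x₊(h)·x₋(h)/(x₋(h) − x₊(h))`. -/
theorem mixture_representation (μ : Measure ℝ) [IsProbabilityMeasure μ]
    (hint : Integrable (id : ℝ → ℝ) μ) (hmean : ∫ x, x ∂μ = 0)
    (habs : 0 < ∫ x, |x| ∂μ)
    (g : ℝ → ℝ) (hgmeas : Measurable g)
    (C : ℝ) (hgbdd : ∀ x : ℝ, C ≤ g x) (hg0 : g 0 = 0) :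
    ∫ x, g x ∂μ
      = ∫ h in Set.Ioo (0:ℝ) (mTot μ),
          oneE g ((xPlus μ h).toReal) ((xMinus μ h).toReal)
            / (((xPlus μ h).toReal * (xMinus μ h).toReal)
                / ((xMinus μ h).toReal - (xPlus μ h).toReal)) := by
  have hgp : Measurable (fun x => max (g x) 0) := hgmeas.max measurable_const
  have hgn : Measurable (fun x => max (-(g x)) 0) := hgmeas.neg.max measurable_const
  set gp : ℝ → ℝ := fun x => max (g x) 0 with hgp_def
  set gn : ℝ → ℝ := fun x => max (-(g x)) 0 with hgn_def
  have hgpnn : ∀ x, 0 ≤ gp x := fun x => le_max_right _ _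
  have hgnnn : ∀ x, 0 ≤ gn x := fun x => le_max_right _ _
  have hgp0 : gp 0 = 0 := by simp [hgp_def, hg0]
  have hgn0 : gn 0 = 0 := by simp [hgn_def, hg0]
  have hdecomp : ∀ x, g x = gp x - gn x := by
    intro x
    simp only [hgp_def, hgn_def]
    rcases le_total 0 (g x) with h | h
    · rw [max_eq_left h, max_eq_right (neg_nonpos.2 h), sub_zero]
    · rw [max_eq_right h, max_eq_left (neg_nonneg.2 h), zero_sub, neg_neg]
  have hCnp : C ≤ 0 := by have := hgbdd 0; rwa [hg0] at this
  have hgnle : ∀ x, gn x ≤ -C := fun x => max_le (by linarith [hgbdd x]) (by linarith)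
  have HP : ∫⁻ h in Ioo (0:ℝ) (mTot μ), ENNReal.ofReal (Ifun μ gp h)
      = ∫⁻ x, ENNReal.ofReal (gp x) ∂μ := star μ hint hmean hgp hgpnn hgp0
  have HN : ∫⁻ h in Ioo (0:ℝ) (mTot μ), ENNReal.ofReal (Ifun μ gn h)
      = ∫⁻ x, ENNReal.ofReal (gn x) ∂μ := star μ hint hmean hgn hgnnn hgn0
  have Lgn_lt : ∫⁻ x, ENNReal.ofReal (gn x) ∂μ < ⊤ := by
    calc ∫⁻ x, ENNReal.ofReal (gn x) ∂μ ≤ ∫⁻ _x, ENNReal.ofReal (-C) ∂μ :=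
        lintegral_mono (fun x => ENNReal.ofReal_le_ofReal (hgnle x))
      _ = ENNReal.ofReal (-C) := by rw [lintegral_const, measure_univ, mul_one]
      _ < ⊤ := ENNReal.ofReal_lt_top
  have hp_nonneg : 0 ≤ᵐ[volume.restrict (Ioo (0:ℝ) (mTot μ))] Ifun μ gp :=
    (ae_restrict_iff' measurableSet_Ioo).2 (ae_of_all _ (fun h hh =>
      add_nonneg (div_nonneg (hgpnn _) (xPlus_toReal_pos μ hint hh).le)
        (div_nonneg (hgpnn _) (by linarith [xMinus_toReal_neg μ hint hmean hh]))))
  have hn_nonneg : 0 ≤ᵐ[volume.restrict (Ioo (0:ℝ) (mTot μ))] Ifun μ gn :=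
    (ae_restrict_iff' measurableSet_Ioo).2 (ae_of_all _ (fun h hh =>
      add_nonneg (div_nonneg (hgnnn _) (xPlus_toReal_pos μ hint hh).le)
        (div_nonneg (hgnnn _) (by linarith [xMinus_toReal_neg μ hint hmean hh]))))
  have hgnInt : Integrable gn μ :=
    ⟨hgn.aestronglyMeasurable,
      by rw [hasFiniteIntegral_iff_ofReal (ae_of_all _ hgnnn)]; exact Lgn_lt⟩
  have hInInt : Integrable (Ifun μ gn) (volume.restrict (Ioo (0:ℝ) (mTot μ))) :=
    ⟨(Ifun_meas μ gn hgn).aestronglyMeasurable,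
      by rw [hasFiniteIntegral_iff_ofReal hn_nonneg, HN]; exact Lgn_lt⟩
  have hIfun_decomp : Ifun μ g = fun h => Ifun μ gp h - Ifun μ gn h := by
    funext h
    simp only [Ifun]
    rw [hdecomp ((xPlus μ h).toReal), hdecomp ((xMinus μ h).toReal)]
    ring
  have hJI : EqOn (fun h => oneE g ((xPlus μ h).toReal) ((xMinus μ h).toReal)
            / (((xPlus μ h).toReal * (xMinus μ h).toReal)
                / ((xMinus μ h).toReal - (xPlus μ h).toReal)))
      (Ifun μ g) (Ioo (0:ℝ) (mTot μ)) := by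
    intro h hh
    have ha := xPlus_toReal_pos μ hint hh
    have hb := xMinus_toReal_neg μ hint hmean hh
    simp only [Ifun]
    set a := (xPlus μ h).toReal
    set b := (xMinus μ h).toReal
    rw [oneE, if_pos (mul_neg_of_pos_of_neg ha hb)]
    have ha0 : a ≠ 0 := ne_of_gt ha
    have hb0 : b ≠ 0 := ne_of_lt hb
    have hba : b - a ≠ 0 := by intro hc; apply ha0; linarith [sub_eq_zero.1 hc]
    have hab : a - b ≠ 0 := by intro hc; apply ha0; linarith [sub_eq_zero.1 hc]
    have hnb0 : -b ≠ 0 := neg_ne_zero.2 hb0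
    have expand : (a*b)/(b-a) ≠ 0 := div_ne_zero (mul_ne_zero ha0 hb0) hba
    rw [div_eq_iff expand]
    field_simp
    ring
  rw [setIntegral_congr_fun measurableSet_Ioo hJI]
  rcases eq_or_ne (∫⁻ x, ENNReal.ofReal (gp x) ∂μ) ⊤ with hp | hp
  · -- non-integrable case
    have hgpNot : ¬ Integrable gp μ := by
      intro hI
      have := (hasFiniteIntegral_iff_ofReal (ae_of_all _ hgpnn)).1 hI.2
      rw [hp] at this
      exact absurd this (lt_irrefl _)
    have hgNot : ¬ Integrable g μ := by
      intro hgi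
      apply hgpNot
      have hgpeq : gp = fun x => g x + gn x := funext fun x => by rw [hdecomp x]; ring
      rw [hgpeq]
      exact hgi.add hgnInt
    have hIpNot : ¬ Integrable (Ifun μ gp) (volume.restrict (Ioo (0:ℝ) (mTot μ))) := by
      intro hI
      have := (hasFiniteIntegral_iff_ofReal hp_nonneg).1 hI.2
      rw [HP, hp] at this
      exact absurd this (lt_irrefl _)
    have hINot : ¬ Integrable (Ifun μ g) (volume.restrict (Ioo (0:ℝ) (mTot μ))) := by
      intro hI
      apply hIpNot
      have : Ifun μ gp = fun h => Ifun μ g h + Ifun μ gn h := by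
        funext h
        rw [hIfun_decomp]
        ring
      rw [this]
      exact hI.add hInInt
    rw [integral_undef hgNot, integral_undef hINot]
  · -- integrable case
    have hgpInt : Integrable gp μ :=
      ⟨hgp.aestronglyMeasurable,
        by rw [hasFiniteIntegral_iff_ofReal (ae_of_all _ hgpnn)]; exact lt_top_iff_ne_top.2 hp⟩
    have hIpInt : Integrable (Ifun μ gp) (volume.restrict (Ioo (0:ℝ) (mTot μ))) :=
      ⟨(Ifun_meas μ gp hgp).aestronglyMeasurable,
        by rw [hasFiniteIntegral_iff_ofReal hp_nonneg, HP]; exact lt_top_iff_ne_top.2 hp⟩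
    have HPeq : ∫ h in Ioo (0:ℝ) (mTot μ), Ifun μ gp h = ∫ x, gp x ∂μ := by
      rw [integral_eq_lintegral_of_nonneg_ae hp_nonneg
          (Ifun_meas μ gp hgp).aestronglyMeasurable,
        integral_eq_lintegral_of_nonneg_ae (ae_of_all _ hgpnn) hgp.aestronglyMeasurable, HP]
    have HNeq : ∫ h in Ioo (0:ℝ) (mTot μ), Ifun μ gn h = ∫ x, gn x ∂μ := by
      rw [integral_eq_lintegral_of_nonneg_ae hn_nonneg
          (Ifun_meas μ gn hgn).aestronglyMeasurable,
        integral_eq_lintegral_of_nonneg_ae (ae_of_all _ hgnnn) hgn.aestronglyMeasurable, HN]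
    calc ∫ x, g x ∂μ = ∫ x, (gp x - gn x) ∂μ := by
          congr 1; funext x; exact hdecomp x
      _ = ∫ x, gp x ∂μ - ∫ x, gn x ∂μ := integral_sub hgpInt hgnInt
      _ = (∫ h in Ioo (0:ℝ) (mTot μ), Ifun μ gp h)
          - ∫ h in Ioo (0:ℝ) (mTot μ), Ifun μ gn h := by rw [HPeq, HNeq]
      _ = ∫ h in Ioo (0:ℝ) (mTot μ), (Ifun μ gp h - Ifun μ gn h) :=
          (integral_sub hIpInt hInInt).symm
      _ = ∫ h in Ioo (0:ℝ) (mTot μ), Ifun μ g h := by rw [hIfun_decomp]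
end
end

section
/- Let X be a zero-mean random variable with P(X = 0) < 1. Then ∫₀^m dh/x₊(h) = P(X > 0) and ∫₀^m dh/(−x₋(h)) = P(X < 0), where m = E X⁺. -/
open MeasureTheory ProbabilityTheory Set Function

noncomputable section

namespace Aux

/-- The measure `ν = z⁺ dμ`. -/
def nu (μ : Measure ℝ) : Measure ℝ := μ.withDensity (fun z => ENNReal.ofReal z)

lemma nu_apply (μ : Measure ℝ) {s : Set ℝ} (hs : MeasurableSet s) :
    nu μ s = ∫⁻ z in s, ENNReal.ofReal z ∂μ := withDensity_apply _ hs

lemma G_of_nonneg (μ : Measure ℝ) {x : ℝ} (hx : 0 ≤ x) :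
    G μ x = ∫ z in Set.Ioc (0:ℝ) x, z ∂μ := if_pos hx

lemma G_nonneg (μ : Measure ℝ) {x : ℝ} (hx : 0 ≤ x) : 0 ≤ G μ x := by
  rw [G_of_nonneg μ hx]
  exact setIntegral_nonneg measurableSet_Ioc (fun z hz => le_of_lt hz.1)

lemma mTot_nonneg (μ : Measure ℝ) : 0 ≤ mTot μ :=
  setIntegral_nonneg measurableSet_Ioi (fun z hz => le_of_lt hz)

lemma ofReal_G (μ : Measure ℝ) (hint : Integrable (id : ℝ → ℝ) μ) {x : ℝ} (hx : 0 ≤ x) :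
    ENNReal.ofReal (G μ x) = nu μ (Set.Ioc 0 x) := by
  have hint' : Integrable (fun z : ℝ => z) μ := hint
  rw [G_of_nonneg μ hx, nu_apply μ measurableSet_Ioc]
  exact ofReal_integral_eq_lintegral_ofReal (hint'.integrableOn)
      (ae_restrict_of_forall_mem measurableSet_Ioc (fun z hz => le_of_lt hz.1))

lemma ofReal_mTot (μ : Measure ℝ) (hint : Integrable (id : ℝ → ℝ) μ) :
    ENNReal.ofReal (mTot μ) = nu μ (Set.Ioi 0) := by
  have hint' : Integrable (fun z : ℝ => z) μ := hint
  rw [mTot, nu_apply μ measurableSet_Ioi]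
  exact ofReal_integral_eq_lintegral_ofReal (hint'.integrableOn)
      (ae_restrict_of_forall_mem measurableSet_Ioi (fun z hz => le_of_lt hz))

lemma nu_Iic_zero (μ : Measure ℝ) : nu μ (Set.Iic 0) = 0 := by
  rw [nu_apply μ measurableSet_Iic]
  rw [setLIntegral_congr_fun measurableSet_Iic
    ((fun z hz => by
      show ENNReal.ofReal z = 0
      exact ENNReal.ofReal_eq_zero.2 hz))]
  simp

lemma nu_fin (μ : Measure ℝ) (hint : Integrable (id : ℝ → ℝ) μ) (s : Set ℝ) :
    nu μ s ≠ ⊤ := by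
  have h1 : nu μ s ≤ nu μ Set.univ := measure_mono (Set.subset_univ s)
  have h2 : nu μ Set.univ = ∫⁻ z, ENNReal.ofReal z ∂μ := by
    rw [nu_apply μ MeasurableSet.univ, Measure.restrict_univ]
  have h3 : ∫⁻ z, ENNReal.ofReal z ∂μ ≤ ∫⁻ z, ‖z‖₊ ∂μ := by
    refine lintegral_mono (fun z => ?_)
    rw [← enorm_eq_nnnorm, Real.enorm_eq_ofReal_abs]
    exact ENNReal.ofReal_le_ofReal (le_abs_self z)
  have h4 : ∫⁻ z, ‖z‖₊ ∂μ < ⊤ := hint.hasFiniteIntegral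
  exact ne_of_lt (lt_of_le_of_lt (h1.trans_eq h2) (lt_of_le_of_lt h3 h4))

lemma G_mono (μ : Measure ℝ) (hint : Integrable (id : ℝ → ℝ) μ) {x y : ℝ}
    (hx : 0 ≤ x) (hxy : x ≤ y) : G μ x ≤ G μ y := by
  have hy : 0 ≤ y := hx.trans hxy
  rw [← ENNReal.ofReal_le_ofReal_iff (G_nonneg μ hy), ofReal_G μ hint hx, ofReal_G μ hint hy]
  exact measure_mono (Set.Ioc_subset_Ioc_right hxy)

lemma G_le_mTot (μ : Measure ℝ) (hint : Integrable (id : ℝ → ℝ) μ) {x : ℝ} (hx : 0 ≤ x) :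
    G μ x ≤ mTot μ := by
  rw [← ENNReal.ofReal_le_ofReal_iff (mTot_nonneg μ), ofReal_G μ hint hx, ofReal_mTot μ hint]
  exact measure_mono Set.Ioc_subset_Ioi_self

/-- Right continuity consequence: if `h ≤ G y` for all `y > x`, then `h ≤ G x`. -/
lemma le_G_of_forall_lt (μ : Measure ℝ) (hint : Integrable (id : ℝ → ℝ) μ) {x h : ℝ}
    (hx : 0 ≤ x) (hh : ∀ y : ℝ, x < y → h ≤ G μ y) : h ≤ G μ x := by
  have key : Filter.Tendsto (fun n : ℕ => nu μ (Set.Ioc 0 (x + 1 / (n + 1))))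
      Filter.atTop (nhds (nu μ (⋂ n : ℕ, Set.Ioc 0 (x + 1 / (n + 1))))) := by
    refine tendsto_measure_iInter_atTop
      (fun n => measurableSet_Ioc.nullMeasurableSet)
      (fun i j hij => Set.Ioc_subset_Ioc_right (by
        have : (1:ℝ) / (j + 1) ≤ 1 / (i + 1) := by
          apply one_div_le_one_div_of_le (by positivity)
          exact_mod_cast add_le_add_left (Nat.cast_le.2 hij) 1
        linarith)) ⟨0, nu_fin μ hint _⟩
  have hiInter : (⋂ n : ℕ, Set.Ioc 0 (x + 1 / (n + 1))) = Set.Ioc 0 x := by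
    ext z
    simp only [Set.mem_iInter, Set.mem_Ioc]
    constructor
    · rintro hz
      refine ⟨(hz 0).1, ?_⟩
      by_contra hzx
      push_neg at hzx
      obtain ⟨n, hn⟩ := exists_nat_one_div_lt (sub_pos.2 hzx)
      have := (hz n).2
      linarith
    · rintro ⟨hz0, hzx⟩ n
      have : (0:ℝ) < 1 / (n + 1) := by positivity
      exact ⟨hz0, by linarith⟩
  rw [hiInter] at key
  have hle : ENNReal.ofReal h ≤ nu μ (Set.Ioc 0 x) := by
    refine ge_of_tendsto key (Filter.Eventually.of_forall (fun n => ?_))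
    have hpos : (0:ℝ) < 1 / (n + 1 : ℝ) := by positivity
    rw [← ofReal_G μ hint (by linarith : (0:ℝ) ≤ x + 1 / (n + 1))]
    exact ENNReal.ofReal_le_ofReal (hh _ (by linarith))
  rw [← ofReal_G μ hint hx] at hle
  exact (ENNReal.ofReal_le_ofReal_iff (G_nonneg μ hx)).1 hle

lemma G_zero (μ : Measure ℝ) : G μ 0 = 0 := by
  rw [G_of_nonneg μ le_rfl, Set.Ioc_self, Measure.restrict_empty, integral_zero_measure]

lemma Gbar_coe (μ : Measure ℝ) (x : ℝ) : Gbar μ (x : EReal) = G μ x := by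
  rw [Gbar, if_neg (EReal.coe_ne_top x), if_neg (EReal.coe_ne_bot x), EReal.toReal_coe]

lemma monotone_xPlus (μ : Measure ℝ) : Monotone (xPlus μ) := by
  intro h1 h2 h12
  exact sInf_le_sInf (fun x hx => ⟨hx.1, le_trans h12 hx.2⟩)

lemma toReal_nonneg' {s : EReal} (h0 : 0 ≤ s) (hst : s ≠ ⊤) : 0 ≤ s.toReal := by
  have := EReal.toReal_le_toReal h0 (by simp) hst
  simpa using this

lemma exists_G_lt (μ : Measure ℝ) (hint : Integrable (id : ℝ → ℝ) μ) {h : ℝ} (hh : 0 < h) :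
    ∃ δ : ℝ, 0 < δ ∧ G μ δ < h := by
  by_contra hc
  push_neg at hc
  have := le_G_of_forall_lt μ hint le_rfl (fun y hy => hc y hy)
  rw [G_zero] at this
  linarith

lemma xPlus_nonneg (μ : Measure ℝ) (h : ℝ) : 0 ≤ xPlus μ h :=
  le_sInf (fun x hx => hx.1)

lemma xPlus_ne_bot (μ : Measure ℝ) (h : ℝ) : xPlus μ h ≠ ⊥ := by
  intro hb
  have := xPlus_nonneg μ h
  rw [hb] at this
  exact absurd this (by simp)

lemma xPlus_ne_top (μ : Measure ℝ) (hint : Integrable (id : ℝ → ℝ) μ)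
    {h : ℝ} (hh0 : 0 < h) (hhm : h < mTot μ) : xPlus μ h ≠ ⊤ := by
  have hUnion : Set.Ioi (0:ℝ) = ⋃ n : ℕ, Set.Ioc (0:ℝ) n := by
    ext z
    simp only [Set.mem_Ioi, Set.mem_iUnion, Set.mem_Ioc]
    exact ⟨fun hz => (exists_nat_ge z).imp (fun n hn => ⟨hz, hn⟩), fun ⟨n, hn⟩ => hn.1⟩
  have hlt : ENNReal.ofReal h < ⨆ n : ℕ, nu μ (Set.Ioc (0:ℝ) n) := by
    rw [← Directed.measure_iUnion (fun i j => ⟨max i j,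
      Set.Ioc_subset_Ioc_right (by exact_mod_cast le_max_left i j),
      Set.Ioc_subset_Ioc_right (by exact_mod_cast le_max_right i j)⟩), ← hUnion,
      ← ofReal_mTot μ hint]
    exact (ENNReal.ofReal_lt_ofReal_iff_of_nonneg hh0.le).2 hhm
  obtain ⟨n, hn⟩ := lt_iSup_iff.1 hlt
  rw [← ofReal_G μ hint (Nat.cast_nonneg n)] at hn
  have hGn : h ≤ G μ n := le_of_lt (by
    by_contra hc
    push_neg at hc
    exact absurd (ENNReal.ofReal_le_ofReal hc) (not_le.2 hn))
  have hmem : ((n : ℝ) : EReal) ∈ {x : EReal | 0 ≤ x ∧ Gbar μ x ≥ h} := by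
    refine ⟨by exact_mod_cast (Nat.cast_nonneg n : (0:ℝ) ≤ n), ?_⟩
    rw [Gbar_coe]
    exact hGn
  exact ne_top_of_le_ne_top (EReal.coe_ne_top _) (sInf_le hmem)

lemma coe_le_xPlus (μ : Measure ℝ) (hint : Integrable (id : ℝ → ℝ) μ)
    {h δ : ℝ} (hδ : 0 < δ) (hGδ : G μ δ < h) : (δ : EReal) ≤ xPlus μ h := by
  refine le_sInf (fun s hs => ?_)
  by_contra hc
  push_neg at hc
  have hsb : s ≠ ⊥ := fun hb => by
    have := hs.1; rw [hb] at this; exact absurd this (by simp)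
  have hst : s ≠ ⊤ := ne_top_of_lt (hc.trans_le le_top)
  have hG : h ≤ G μ s.toReal := by
    have := hs.2
    rwa [Gbar, if_neg hst, if_neg hsb] at this
  have h0s : (0:ℝ) ≤ s.toReal := toReal_nonneg' hs.1 hst
  have hsd : s.toReal ≤ δ := by
    have := EReal.toReal_le_toReal hc.le hsb (EReal.coe_ne_top δ)
    rwa [EReal.toReal_coe] at this
  have := (hG.trans (G_mono μ hint h0s hsd))
  linarith

lemma xPlus_toReal_pos (μ : Measure ℝ) (hint : Integrable (id : ℝ → ℝ) μ)
    {h : ℝ} (hh0 : 0 < h) (hhm : h < mTot μ) : 0 < (xPlus μ h).toReal := by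
  obtain ⟨δ, hδ, hGδ⟩ := exists_G_lt μ hint hh0
  have h1 : (δ : EReal) ≤ xPlus μ h := coe_le_xPlus μ hint hδ hGδ
  have h2 := EReal.toReal_le_toReal h1 (EReal.coe_ne_bot δ) (xPlus_ne_top μ hint hh0 hhm)
  rw [EReal.toReal_coe] at h2
  linarith

lemma xPlus_toReal_le_iff (μ : Measure ℝ) (hint : Integrable (id : ℝ → ℝ) μ)
    {h x : ℝ} (hh0 : 0 < h) (hhm : h < mTot μ) (hx : 0 ≤ x) :
    (xPlus μ h).toReal ≤ x ↔ h ≤ G μ x := by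
  constructor
  · intro hle
    have hnt := xPlus_ne_top μ hint hh0 hhm
    have hnb := xPlus_ne_bot μ h
    have hcoe : xPlus μ h ≤ (x : EReal) := by
      rw [← EReal.coe_toReal hnt hnb]
      exact_mod_cast hle
    refine le_G_of_forall_lt μ hint hx (fun y hy => ?_)
    have hlt : sInf {x : EReal | 0 ≤ x ∧ Gbar μ x ≥ h} < (y : EReal) := by
      rw [← xPlus]
      exact lt_of_le_of_lt hcoe (by exact_mod_cast hy)
    obtain ⟨s, hs, hsy⟩ := sInf_lt_iff.1 hlt
    have hsb : s ≠ ⊥ := fun hb => by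
      have := hs.1; rw [hb] at this; exact absurd this (by simp)
    have hst : s ≠ ⊤ := ne_top_of_lt hsy
    have hG : h ≤ G μ s.toReal := by
      have := hs.2
      rwa [Gbar, if_neg hst, if_neg hsb] at this
    have h0s : (0:ℝ) ≤ s.toReal := toReal_nonneg' hs.1 hst
    have hsy' : s.toReal ≤ y := by
      have := EReal.toReal_le_toReal hsy.le hsb (EReal.coe_ne_top y)
      rwa [EReal.toReal_coe] at this
    exact hG.trans (G_mono μ hint h0s hsy')
  · intro hG
    have hmem : ((x : ℝ) : EReal) ∈ {x : EReal | 0 ≤ x ∧ Gbar μ x ≥ h} := by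
      refine ⟨by exact_mod_cast hx, ?_⟩
      rw [Gbar_coe]
      exact hG
    have := EReal.toReal_le_toReal (sInf_le hmem) (xPlus_ne_bot μ h) (EReal.coe_ne_top x)
    rwa [EReal.toReal_coe] at this

lemma measurable_q (μ : Measure ℝ) : Measurable (fun h => (xPlus μ h).toReal) :=
  measurable_ereal_toReal.comp (monotone_xPlus μ).measurable

lemma map_eq_nu (μ : Measure ℝ) (hint : Integrable (id : ℝ → ℝ) μ) :
    (volume.restrict (Set.Ioo 0 (mTot μ))).map (fun h => (xPlus μ h).toReal) = nu μ := by
  set m := mTot μ with hm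
  set q : ℝ → ℝ := fun h => (xPlus μ h).toReal with hqdef
  have hq : Measurable q := measurable_q μ
  set P := (volume.restrict (Set.Ioo 0 m)).map q with hP
  haveI : IsFiniteMeasure P := ⟨by
    rw [hP, Measure.map_apply hq MeasurableSet.univ, Set.preimage_univ,
      Measure.restrict_apply MeasurableSet.univ, Set.univ_inter]
    exact measure_Ioo_lt_top⟩
  refine Measure.ext_of_Iic P (nu μ) (fun a => ?_)
  have hPa : P (Set.Iic a) = volume (q ⁻¹' Set.Iic a ∩ Set.Ioo 0 m) := by
    rw [hP, Measure.map_apply hq measurableSet_Iic,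
      Measure.restrict_apply (hq measurableSet_Iic)]
  rcases lt_or_ge a 0 with ha | ha
  · rw [hPa]
    have hempty : q ⁻¹' Set.Iic a ∩ Set.Ioo 0 m = ∅ := by
      ext h
      simp only [Set.mem_inter_iff, Set.mem_preimage, Set.mem_Iic, Set.mem_Ioo,
        Set.mem_empty_iff_false, iff_false, not_and]
      intro hqa h0 hm'
      have := xPlus_toReal_pos μ hint h0 hm'
      linarith
    rw [hempty, measure_empty]
    exact (measure_mono_null (Set.Iic_subset_Iic.2 ha.le) (nu_Iic_zero μ)).symm
  · -- 0 ≤ a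
    have hc0 : 0 ≤ G μ a := G_nonneg μ ha
    have hcm : G μ a ≤ m := G_le_mTot μ hint ha
    have hset : q ⁻¹' Set.Iic a ∩ Set.Ioo 0 m = Set.Iic (G μ a) ∩ Set.Ioo 0 m := by
      ext h
      simp only [Set.mem_inter_iff, Set.mem_preimage, Set.mem_Iic, Set.mem_Ioo]
      constructor
      · rintro ⟨h1, h2⟩
        exact ⟨(xPlus_toReal_le_iff μ hint h2.1 h2.2 ha).1 h1, h2⟩
      · rintro ⟨h1, h2⟩
        exact ⟨(xPlus_toReal_le_iff μ hint h2.1 h2.2 ha).2 h1, h2⟩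
    have hnuIic : nu μ (Set.Iic a) = ENNReal.ofReal (G μ a) := by
      have hsplit : Set.Iic a = Set.Iic 0 ∪ Set.Ioc 0 a := (Set.Iic_union_Ioc_eq_Iic ha).symm
      rw [hsplit, measure_union (Set.Iic_disjoint_Ioc le_rfl) measurableSet_Ioc,
        nu_Iic_zero μ, zero_add, ofReal_G μ hint ha]
    rw [hPa, hset, hnuIic]
    rcases eq_or_lt_of_le hcm with heq | hlt
    · have : Set.Iic (G μ a) ∩ Set.Ioo 0 m = Set.Ioo 0 m :=
        Set.inter_eq_self_of_subset_right (fun h hh => le_of_lt (heq ▸ hh.2))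
      rw [this, Real.volume_Ioo, sub_zero, heq]
    · have : Set.Iic (G μ a) ∩ Set.Ioo 0 m = Set.Ioc 0 (G μ a) := by
        ext h
        simp only [Set.mem_inter_iff, Set.mem_Iic, Set.mem_Ioo, Set.mem_Ioc]
        constructor
        · rintro ⟨h1, h2⟩
          exact ⟨h2.1, h1⟩
        · rintro ⟨h1, h2⟩
          exact ⟨h2, h1, lt_of_le_of_lt h2 hlt⟩
      rw [this, Real.volume_Ioc, sub_zero]

lemma lintegral_inv_nu (μ : Measure ℝ) :
    ∫⁻ z, ENNReal.ofReal z⁻¹ ∂(nu μ) = μ (Set.Ioi 0) := by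
  rw [nu, lintegral_withDensity_eq_lintegral_mul _ ENNReal.measurable_ofReal
    measurable_inv.ennreal_ofReal]
  have hpt : ∀ z : ℝ, ((fun z => ENNReal.ofReal z) * fun z => ENNReal.ofReal z⁻¹) z
      = (Set.Ioi (0:ℝ)).indicator (fun _ => 1) z := by
    intro z
    simp only [Pi.mul_apply, Set.indicator]
    by_cases hz : z ∈ Set.Ioi (0:ℝ)
    · have h0z : (0:ℝ) < z := hz
      rw [if_pos hz, ← ENNReal.ofReal_mul h0z.le, mul_inv_cancel₀ h0z.ne', ENNReal.ofReal_one]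
    · have h0z : z ≤ 0 := not_lt.1 hz
      rw [if_neg hz, ENNReal.ofReal_eq_zero.2 h0z, zero_mul]
  rw [lintegral_congr hpt, lintegral_indicator measurableSet_Ioi, setLIntegral_one]

lemma posSide (μ : Measure ℝ) (hint : Integrable (id : ℝ → ℝ) μ) :
    ∫ h in Set.Ioo (0:ℝ) (mTot μ), ((xPlus μ h).toReal)⁻¹ = (μ (Set.Ioi (0:ℝ))).toReal := by
  have hq : Measurable fun h => (xPlus μ h).toReal := measurable_q μ
  have h1 : ∫ h in Set.Ioo (0:ℝ) (mTot μ), ((xPlus μ h).toReal)⁻¹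
      = ∫ z, z⁻¹ ∂(nu μ) := by
    rw [← map_eq_nu μ hint,
      integral_map hq.aemeasurable measurable_inv.aestronglyMeasurable]
  have hae : 0 ≤ᶠ[ae (nu μ)] fun z : ℝ => z⁻¹ := by
    rw [Filter.EventuallyLE, ae_iff]
    refine measure_mono_null (fun z hz => ?_) (nu_Iic_zero μ)
    simp only [Set.mem_setOf_eq, Pi.zero_apply, not_le] at hz
    exact Set.mem_Iic.2 (le_of_lt (inv_lt_zero.1 hz))
  rw [h1, integral_eq_lintegral_of_nonneg_ae hae measurable_inv.aestronglyMeasurable,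
    lintegral_inv_nu μ]

lemma preimage_neg_Ioc (y : ℝ) : (fun z : ℝ => -z) ⁻¹' Set.Ioc 0 y = Set.Ico (-y) 0 := by
  ext z
  simp only [Set.mem_preimage, Set.mem_Ioc, Set.mem_Ico]
  constructor <;> rintro ⟨h1, h2⟩ <;> constructor <;> linarith

lemma preimage_neg_Ioi : (fun z : ℝ => -z) ⁻¹' Set.Ioi 0 = Set.Iio 0 := by
  ext z
  simp only [Set.mem_preimage, Set.mem_Ioi, Set.mem_Iio]
  constructor <;> intro h <;> linarith

lemma G_map_neg (μ : Measure ℝ) {y : ℝ} (hy : 0 ≤ y) :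
    G (μ.map (fun z : ℝ => -z)) y = G μ (-y) := by
  have hmap : G (μ.map (fun z : ℝ => -z)) y = ∫ z in Set.Ico (-y) 0, -z ∂μ := by
    have := setIntegral_map (μ := μ) (g := fun z : ℝ => -z) (f := fun z : ℝ => z)
      (s := Set.Ioc 0 y) measurableSet_Ioc measurable_id.aestronglyMeasurable
      measurable_neg.aemeasurable
    rw [preimage_neg_Ioc] at this
    rw [G_of_nonneg _ hy]
    exact this
  rcases eq_or_lt_of_le hy with h0 | h0
  · rw [hmap, ← h0, neg_zero, G_zero, Set.Ico_self, Measure.restrict_empty,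
      integral_zero_measure]
  · rw [hmap, G, if_neg (by linarith : ¬ (0:ℝ) ≤ -y)]

lemma mTot_map_neg' (μ : Measure ℝ) :
    mTot (μ.map (fun z : ℝ => -z)) = ∫ z in Set.Iio (0:ℝ), -z ∂μ := by
  have := setIntegral_map (μ := μ) (g := fun z : ℝ => -z) (f := fun z : ℝ => z)
    (s := Set.Ioi 0) measurableSet_Ioi measurable_id.aestronglyMeasurable
    measurable_neg.aemeasurable
  rw [preimage_neg_Ioi] at this
  rw [mTot]
  exact this

lemma integral_singleton_zero (μ : Measure ℝ) : ∫ z in ({0} : Set ℝ), z ∂μ = 0 := by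
  rw [setIntegral_congr_fun (measurableSet_singleton 0)
    (fun z hz => by simpa using hz : ∀ z ∈ ({0} : Set ℝ), z = (0:ℝ))]
  simp

lemma mTot_map_neg (μ : Measure ℝ) (hint : Integrable (id : ℝ → ℝ) μ)
    (hmean : ∫ x, x ∂μ = 0) : mTot (μ.map (fun z : ℝ => -z)) = mTot μ := by
  rw [mTot_map_neg']
  have hint' : Integrable (fun z : ℝ => z) μ := hint
  have hsplit : (∫ z in Set.Iio (0:ℝ), z ∂μ) + ∫ z in Set.Ici (0:ℝ), z ∂μ = 0 := by
    have := integral_add_compl (measurableSet_Iio : MeasurableSet (Set.Iio (0:ℝ))) hint'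
    rwa [compl_Iio, hmean] at this
  have hIci : ∫ z in Set.Ici (0:ℝ), z ∂μ = ∫ z in Set.Ioi (0:ℝ), z ∂μ := by
    have hu : Set.Ici (0:ℝ) = {0} ∪ Set.Ioi 0 := by
      ext z
      simp only [Set.mem_Ici, Set.mem_union, Set.mem_singleton_iff, Set.mem_Ioi]
      constructor
      · intro h; rcases eq_or_lt_of_le h with h | h
        · exact Or.inl h.symm
        · exact Or.inr h
      · rintro (h | h) <;> simp [h, le_of_lt]
    rw [hu, setIntegral_union (by simp [Set.disjoint_left]) measurableSet_Ioi
      hint'.integrableOn hint'.integrableOn, integral_singleton_zero, zero_add]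
  rw [integral_neg]
  rw [hIci] at hsplit
  rw [mTot]
  linarith

lemma Gbar_map_neg (μ : Measure ℝ) (x : EReal) (hx : x ≤ 0) :
    Gbar μ x = Gbar (μ.map (fun z : ℝ => -z)) (-x) := by
  induction x with
  | bot =>
    rw [EReal.neg_bot, Gbar, Gbar, if_neg (by simp), if_pos rfl, if_pos rfl,
      ← mTot_map_neg' μ, mTot]
  | coe r =>
    have hr : r ≤ 0 := by exact_mod_cast hx
    rw [← EReal.coe_neg, Gbar_coe, Gbar_coe, G_map_neg μ (by linarith : (0:ℝ) ≤ -r), neg_neg]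
  | top => exact absurd hx (by simp)

lemma neg_nonneg_iff (a : EReal) : 0 ≤ -a ↔ a ≤ 0 := by
  constructor
  · intro h
    simpa using EReal.le_neg_of_le_neg h
  · intro h
    exact EReal.le_neg_of_le_neg (by simpa : a ≤ -(0:EReal))

lemma xMinus_eq_neg_xPlus (μ : Measure ℝ) (h : ℝ) :
    xMinus μ h = - xPlus (μ.map (fun z : ℝ => -z)) h := by
  set μ' := μ.map (fun z : ℝ => -z) with hμ'
  rw [xMinus, xPlus]
  apply le_antisymm
  · refine sSup_le (fun x hx => ?_)
    have hmem : -x ∈ {y : EReal | 0 ≤ y ∧ Gbar μ' y ≥ h} := by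
      refine ⟨(neg_nonneg_iff x).2 hx.1, ?_⟩
      rw [← Gbar_map_neg μ x hx.1]
      exact hx.2
    have := sInf_le hmem
    rw [← neg_neg x]
    exact EReal.neg_le_neg_iff.2 this
  · rw [EReal.neg_le]
    refine le_sInf (fun y hy => ?_)
    have hmem : -y ∈ {x : EReal | x ≤ 0 ∧ Gbar μ x ≥ h} := by
      have hy0 : -y ≤ 0 := by
        rw [← neg_zero]
        exact EReal.neg_le_neg_iff.2 hy.1
      refine ⟨hy0, ?_⟩
      rw [Gbar_map_neg μ (-y) hy0, neg_neg, ← hμ']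
      exact hy.2
    exact EReal.neg_le.1 (le_sSup hmem)

end Aux

/-- `∫₀^m dh/x₊(h) = P(X > 0)` and `∫₀^m dh/(−x₋(h)) = P(X < 0)`. -/
theorem xPlus_xMinus_integral_identities (μ : Measure ℝ) [IsProbabilityMeasure μ]
    (hint : Integrable (id : ℝ → ℝ) μ) (hmean : ∫ x, x ∂μ = 0)
    (h0 : μ {0} < 1) :
    (∫ h in Set.Ioo (0:ℝ) (mTot μ), ((xPlus μ h).toReal)⁻¹
        = (μ (Set.Ioi (0:ℝ))).toReal) ∧
    (∫ h in Set.Ioo (0:ℝ) (mTot μ), (-(xMinus μ h).toReal)⁻¹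
        = (μ (Set.Iio (0:ℝ))).toReal) := by
  constructor
  · exact Aux.posSide μ hint
  · set μ' := μ.map (fun z : ℝ => -z) with hμ'
    have hint' : Integrable (id : ℝ → ℝ) μ' := by
      rw [hμ', integrable_map_measure aestronglyMeasurable_id measurable_neg.aemeasurable]
      exact hint.neg
    have hmm : mTot μ' = mTot μ := Aux.mTot_map_neg μ hint hmean
    have hmeas : μ' (Set.Ioi 0) = μ (Set.Iio 0) := by
      rw [hμ', Measure.map_apply measurable_neg measurableSet_Ioi, Aux.preimage_neg_Ioi]
    calc ∫ h in Set.Ioo (0:ℝ) (mTot μ), (-(xMinus μ h).toReal)⁻¹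
        = ∫ h in Set.Ioo (0:ℝ) (mTot μ'), ((xPlus μ' h).toReal)⁻¹ := by
          rw [hmm]
          refine setIntegral_congr_fun measurableSet_Ioo (fun h _ => ?_)
          rw [Aux.xMinus_eq_neg_xPlus μ h, EReal.toReal_neg_eq, neg_neg]
      _ = (μ' (Set.Ioi 0)).toReal := Aux.posSide μ' hint'
      _ = (μ (Set.Iio 0)).toReal := by rw [hmeas]
end
end

section
/- (Optimal transport inequality) Let X₁, X₂ be random variables with values in intervals I₁ = [a₁,b₁), I₂ = [a₂,b₂) (−∞ < aᵢ < bᵢ ≤ ∞), and let X̃₁ = x̃₁(H), X̃₂ = x̃₂(H) where H is a non-atomic random variable and x̃₁, x̃₂ are nondecreasing left-continuous functions with X̃ᵢ equal in distribution to Xᵢ (i = 1,2). If k: I₁ × I₂ → ℝ is superadditive (k(a,c) + k(b,d) ≥ k(a,d) + k(b,c) whenever a < b, c < d), right-continuous, and bounded from below, then E k(X₁,X₂) ≤ E k(X̃₁,X̃₂). -/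
open MeasureTheory Set Filter Topology



lemma otiaux_interval (I : Set ℝ) (h : ∃ a : ℝ, I = Set.Ici a ∨ ∃ b : ℝ, a < b ∧ I = Set.Ico a b) :
    ∃ a : ℝ, a ∈ I ∧ (∀ x ∈ I, a ≤ x) ∧ (∀ x ∈ I, ∀ y, a ≤ y → y ≤ x → y ∈ I) ∧ MeasurableSet I ∧
      ∃ u : ℕ → ℝ, Monotone u ∧ (∀ m, u m ∈ I) ∧ ∀ x ∈ I, ∃ m, x ≤ u m := by
  obtain ⟨a, h | ⟨b, hab, h⟩⟩ := h
  · subst h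
    refine ⟨a, le_refl a, fun x hx => hx, fun x hx y hy _ => hy, measurableSet_Ici,
      fun m => a + m, ?_, fun m => by simpa using (Nat.cast_nonneg m : (0:ℝ) ≤ m), fun x hx => ?_⟩
    · intro i j hij
      have : (i : ℝ) ≤ j := Nat.cast_le.mpr hij
      show a + (i:ℝ) ≤ a + (j:ℝ)
      linarith
    · refine ⟨⌈x - a⌉₊, ?_⟩
      have := Nat.le_ceil (x - a)
      show x ≤ a + (⌈x - a⌉₊:ℝ)
      linarith
  · subst h
    have hba : (0:ℝ) < b - a := by linarith
    refine ⟨a, ⟨le_refl a, hab⟩, fun x hx => hx.1, fun x hx y hy hyx => ⟨hy, lt_of_le_of_lt hyx hx.2⟩,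
      measurableSet_Ico, fun m => b - (b - a) / (m + 1), ?_, fun m => ⟨?_, ?_⟩, fun x hx => ?_⟩
    · intro i j hij
      have h1 : (0:ℝ) < (i:ℝ) + 1 := by positivity
      have h2 : (i:ℝ) + 1 ≤ (j:ℝ) + 1 := by
        have : (i : ℝ) ≤ j := Nat.cast_le.mpr hij
        linarith
      have := div_le_div_of_nonneg_left hba.le h1 h2
      dsimp only
      linarith [div_le_div_of_nonneg_left hba.le h1 h2]
    · have h1 : (0:ℝ) < (m:ℝ) + 1 := by positivity
      have h2 : (b - a) / (m + 1) ≤ (b - a) := by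
        apply div_le_self hba.le
        simp
      linarith
    · have h1 : (0:ℝ) < (b - a) / (m + 1) := by positivity
      linarith
    · have hxb : 0 < b - x := by linarith [hx.2]
      refine ⟨⌈(b - a) / (b - x)⌉₊, ?_⟩
      have h1 : (b - a) / (b - x) ≤ (⌈(b - a) / (b - x)⌉₊ : ℝ) := Nat.le_ceil _
      have h2 : (b - a) / ((⌈(b - a) / (b - x)⌉₊ : ℝ) + 1) ≤ b - x := by
        rw [div_le_iff₀ (by positivity)]
        calc b - a ≤ ((b - a) / (b - x)) * (b - x) := by rw [div_mul_cancel₀]; exact hxb.ne'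
        _ ≤ ((⌈(b - a) / (b - x)⌉₊ : ℝ) + 1) * (b - x) := by
            apply mul_le_mul_of_nonneg_right _ hxb.le
            linarith
        _ = (b - x) * ((⌈(b - a) / (b - x)⌉₊ : ℝ) + 1) := by ring
      linarith


lemma otiaux_upset (A B : Set ℝ) (hA : ∀ x ∈ A, ∀ y, x ≤ y → y ∈ A)
    (hB : ∀ x ∈ B, ∀ y, x ≤ y → y ∈ B) : A ⊆ B ∨ B ⊆ A := by
  by_contra h
  push_neg at h
  obtain ⟨h1, h2⟩ := h
  obtain ⟨p, hpA, hpB⟩ := Set.not_subset.mp h1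
  obtain ⟨q, hqB, hqA⟩ := Set.not_subset.mp h2
  rcases le_total p q with hpq | hqp
  · exact hqA (hA p hpA q hpq)
  · exact hpB (hB q hqB p hqp)

lemma otiaux_sum_if_lt {β : Type*} [AddCommMonoid β] (N i₀ : ℕ) (h : i₀ ≤ N) (f : ℕ → β) :
    (∑ i ∈ Finset.range N, if i < i₀ then f i else 0) = ∑ i ∈ Finset.range i₀, f i := by
  rw [← Finset.sum_filter]
  congr 1
  ext a
  simp only [Finset.mem_filter, Finset.mem_range]
  omega

lemma otiaux_ceil_le (z : ℝ) (n : ℕ) : z ≤ (⌈z * 2 ^ n⌉ : ℝ) / 2 ^ n := by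
  rw [le_div_iff₀ (by positivity)]
  exact Int.le_ceil _

lemma otiaux_ceil_tendsto (z : ℝ) :
    Filter.Tendsto (fun n : ℕ => (⌈z * 2 ^ n⌉ : ℝ) / 2 ^ n) Filter.atTop (nhds z) := by
  have hub : ∀ n : ℕ, (⌈z * 2 ^ n⌉ : ℝ) / 2 ^ n ≤ z + (1 / 2) ^ n := by
    intro n
    rw [div_le_iff₀ (by positivity : (0:ℝ) < 2 ^ n)]
    have := Int.ceil_lt_add_one (z * 2 ^ n)
    have h2 : ((1:ℝ)/2) ^ n * 2 ^ n = 1 := by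
      rw [← mul_pow]; norm_num
    nlinarith [pow_pos (by norm_num : (0:ℝ) < 2) n]
  have hlim : Filter.Tendsto (fun n : ℕ => z + (1 / 2 : ℝ) ^ n) Filter.atTop (nhds (z + 0)) := by
    exact tendsto_const_nhds.add (tendsto_pow_atTop_nhds_zero_of_lt_one (by norm_num) (by norm_num))
  rw [add_zero] at hlim
  exact tendsto_of_tendsto_of_tendsto_of_le_of_le tendsto_const_nhds hlim
    (fun n => otiaux_ceil_le z n) hub

lemma otiaux_meas {Ω : Type*} [MeasurableSpace Ω] (I₁ I₂ : Set ℝ) (k : ℝ → ℝ → ℝ)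
    (hrc : ∀ p : ℝ × ℝ, p ∈ I₁ ×ˢ I₂ →
      ContinuousWithinAt (fun q : ℝ × ℝ => k q.1 q.2) (Set.Ici p.1 ×ˢ Set.Ici p.2) p)
    (Z₁ Z₂ : Ω → ℝ) (h₁ : Measurable Z₁) (h₂ : Measurable Z₂)
    (m₁ : ∀ ω, Z₁ ω ∈ I₁) (m₂ : ∀ ω, Z₂ ω ∈ I₂) :
    Measurable fun ω => k (Z₁ ω) (Z₂ ω) := by
  have happrox : ∀ n : ℕ, Measurable (fun ω =>
      k ((⌈Z₁ ω * 2 ^ n⌉ : ℝ) / 2 ^ n) ((⌈Z₂ ω * 2 ^ n⌉ : ℝ) / 2 ^ n)) := by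
    intro n
    have hp : Measurable (fun ω => ((⌈Z₁ ω * 2 ^ n⌉, ⌈Z₂ ω * 2 ^ n⌉) : ℤ × ℤ)) :=
      (Int.measurable_ceil.comp (h₁.mul_const _)).prodMk (Int.measurable_ceil.comp (h₂.mul_const _))
    exact (measurable_of_countable (fun p : ℤ × ℤ => k ((p.1 : ℝ) / 2 ^ n) ((p.2 : ℝ) / 2 ^ n))).comp hp
  apply measurable_of_tendsto_metrizable happrox
  rw [tendsto_pi_nhds]
  intro ω
  have hcw := hrc (Z₁ ω, Z₂ ω) ⟨m₁ ω, m₂ ω⟩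
  have hseq : Filter.Tendsto (fun n : ℕ =>
      (((⌈Z₁ ω * 2 ^ n⌉ : ℝ) / 2 ^ n), ((⌈Z₂ ω * 2 ^ n⌉ : ℝ) / 2 ^ n)))
      Filter.atTop (nhdsWithin (Z₁ ω, Z₂ ω) (Set.Ici (Z₁ ω) ×ˢ Set.Ici (Z₂ ω))) := by
    rw [tendsto_nhdsWithin_iff]
    constructor
    · exact (otiaux_ceil_tendsto (Z₁ ω)).prodMk_nhds (otiaux_ceil_tendsto (Z₂ ω))
    · exact Filter.Eventually.of_forall fun n => ⟨otiaux_ceil_le _ n, otiaux_ceil_le _ n⟩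
  exact hcw.tendsto.comp hseq


noncomputable def otiS (a u : ℝ) (n : ℕ) (x : ℝ) : ℝ :=
  a + (⌈(min x u - a) / ((u - a) / 2 ^ n)⌉₊ : ℝ) * ((u - a) / 2 ^ n)

lemma otiS_delta_pos (a u : ℝ) (hau : a < u) (n : ℕ) : 0 < (u - a) / 2 ^ n :=
  div_pos (by linarith) (by positivity)

lemma otiS_w_nonneg (a u x : ℝ) (hax : a ≤ x) (hau : a ≤ u) (n : ℕ) :
    0 ≤ (min x u - a) / ((u - a) / 2 ^ n) := by
  apply div_nonneg _ (div_nonneg (by linarith) (by positivity))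
  simp [le_min_iff, hax, hau]

lemma otiS_ceil_le (a u x : ℝ) (hax : a ≤ x) (hau : a < u) (n : ℕ) :
    ⌈(min x u - a) / ((u - a) / 2 ^ n)⌉₊ ≤ 2 ^ n := by
  rw [Nat.ceil_le]
  rw [div_le_iff₀ (otiS_delta_pos a u hau n)]
  push_cast
  have : min x u ≤ u := min_le_right _ _
  have h3 : (2:ℝ) ^ n * ((u - a) / 2 ^ n) = u - a := by field_simp
  linarith

lemma otiS_ge (a u x : ℝ) (hax : a ≤ x) (hau : a < u) (n : ℕ) : min x u ≤ otiS a u n x := by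
  have hd := otiS_delta_pos a u hau n
  have h1 : (min x u - a) / ((u - a) / 2 ^ n) ≤ ⌈(min x u - a) / ((u - a) / 2 ^ n)⌉₊ :=
    Nat.le_ceil _
  have := mul_le_mul_of_nonneg_right h1 hd.le
  rw [div_mul_cancel₀ _ hd.ne'] at this
  unfold otiS
  linarith

lemma otiS_le_u (a u x : ℝ) (hax : a ≤ x) (hau : a < u) (n : ℕ) : otiS a u n x ≤ u := by
  have hd := otiS_delta_pos a u hau n
  have h1 := otiS_ceil_le a u x hax hau n
  have h2 : (⌈(min x u - a) / ((u - a) / 2 ^ n)⌉₊ : ℝ) ≤ (2:ℝ) ^ n := by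
    exact_mod_cast Nat.cast_le.mpr h1
  have := mul_le_mul_of_nonneg_right h2 hd.le
  have h3 : (2:ℝ) ^ n * ((u - a) / 2 ^ n) = u - a := by
    field_simp
  unfold otiS
  nlinarith

lemma otiS_ge_a (a u x : ℝ) (hax : a ≤ x) (hau : a < u) (n : ℕ) : a ≤ otiS a u n x := by
  have hd := otiS_delta_pos a u hau n
  unfold otiS
  nlinarith [Nat.cast_nonneg (α := ℝ) ⌈(min x u - a) / ((u - a) / 2 ^ n)⌉₊]

lemma otiS_le (a u x : ℝ) (hax : a ≤ x) (hau : a < u) (n : ℕ) :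
    otiS a u n x ≤ min x u + (u - a) / 2 ^ n := by
  have hd := otiS_delta_pos a u hau n
  have h0 := otiS_w_nonneg a u x hax hau.le n
  have h1 : (⌈(min x u - a) / ((u - a) / 2 ^ n)⌉₊ : ℝ) < (min x u - a) / ((u - a) / 2 ^ n) + 1 :=
    Nat.ceil_lt_add_one h0
  have := mul_le_mul_of_nonneg_right h1.le hd.le
  rw [add_mul, div_mul_cancel₀ _ hd.ne', one_mul] at this
  unfold otiS
  linarith

lemma otiS_anti (a u x : ℝ) (hax : a ≤ x) (hau : a < u) :
    Antitone (fun n => otiS a u n x) := by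
  apply antitone_nat_of_succ_le
  intro n
  have hd := otiS_delta_pos a u hau n
  have hd' := otiS_delta_pos a u hau (n + 1)
  set z := min x u - a with hz
  have hzn : 0 ≤ z := by
    have : a ≤ min x u := le_min hax hau.le
    rw [hz]
    linarith
  set δ := (u - a) / 2 ^ n with hδ
  have hhalf : (u - a) / 2 ^ (n + 1) = δ / 2 := by
    rw [hδ, pow_succ]
    ring
  show a + (⌈z / ((u - a) / 2 ^ (n+1))⌉₊ : ℝ) * ((u - a) / 2 ^ (n+1)) ≤ a + (⌈z / δ⌉₊ : ℝ) * δ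
  rw [hhalf]
  set c := ⌈z / δ⌉₊ with hc
  have h1 : z / (δ / 2) ≤ ((2 * c : ℕ) : ℝ) := by
    push_cast
    have := Nat.le_ceil (z / δ)
    rw [div_div_eq_mul_div]
    rw [div_le_iff₀ hd]
    rw [div_le_iff₀ hd] at this
    · nlinarith [Nat.le_ceil (z / δ), hd]
  have h2 : ⌈z / (δ / 2)⌉₊ ≤ 2 * c := Nat.ceil_le.mpr h1
  have h3 : (⌈z / (δ / 2)⌉₊ : ℝ) ≤ ((2 * c : ℕ) : ℝ) := Nat.cast_le.mpr h2
  push_cast at h3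
  nlinarith

lemma otiS_tendsto (a u x : ℝ) (hax : a ≤ x) (hau : a < u) :
    Filter.Tendsto (fun n => otiS a u n x) Filter.atTop (nhds (min x u)) := by
  have hub : Filter.Tendsto (fun n : ℕ => min x u + (u - a) * (1 / 2 : ℝ) ^ n)
      Filter.atTop (nhds (min x u + (u - a) * 0)) :=
    tendsto_const_nhds.add (tendsto_const_nhds.mul
      (tendsto_pow_atTop_nhds_zero_of_lt_one (by norm_num) (by norm_num)))
  rw [mul_zero, add_zero] at hub
  apply tendsto_of_tendsto_of_tendsto_of_le_of_le tendsto_const_nhds hub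
  · exact fun n => otiS_ge a u x hax hau n
  · intro n
    have := otiS_le a u x hax hau n
    have he : (u - a) / 2 ^ n = (u - a) * (1 / 2 : ℝ) ^ n := by
      rw [div_pow, one_pow]
      ring
    rw [he] at this
    exact this

lemma otiS_lt_iff (a u x : ℝ) (hax : a ≤ x) (hau : a < u) (n : ℕ) (i : ℕ) (hi : i < 2 ^ n) :
    a + (i : ℝ) * ((u - a) / 2 ^ n) < x ↔ i < ⌈(min x u - a) / ((u - a) / 2 ^ n)⌉₊ := by
  have hd := otiS_delta_pos a u hau n
  have hiu : a + (i : ℝ) * ((u - a) / 2 ^ n) < u := by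
    have h1 : (i : ℝ) < (2:ℝ) ^ n := by exact_mod_cast hi
    have h3 : (2:ℝ) ^ n * ((u - a) / 2 ^ n) = u - a := by field_simp
    nlinarith
  rw [Nat.lt_ceil, lt_div_iff₀ hd]
  constructor
  · intro h
    have : a + (i:ℝ) * ((u - a) / 2 ^ n) < min x u := lt_min h hiu
    linarith
  · intro h
    have : a + (i:ℝ) * ((u - a) / 2 ^ n) < min x u := by linarith
    exact lt_of_lt_of_le this (min_le_left _ _)

lemma otiS_measurable (a u : ℝ) (n : ℕ) : Measurable (otiS a u n) := by
  unfold otiS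
  apply measurable_const.add
  apply Measurable.mul_const
  have h1 : Measurable fun x : ℝ => (min x u - a) / ((u - a) / 2 ^ n) :=
    (((measurable_id.min measurable_const).sub measurable_const).div_const _)
  exact (measurable_of_countable (fun m : ℕ => (m : ℝ))).comp (Nat.measurable_ceil.comp h1)


lemma otiaux_tendsto_pair {I₁ I₂ : Set ℝ} {k : ℝ → ℝ → ℝ}
    (hrc : ∀ p : ℝ × ℝ, p ∈ I₁ ×ˢ I₂ →
      ContinuousWithinAt (fun q : ℝ × ℝ => k q.1 q.2) (Set.Ici p.1 ×ˢ Set.Ici p.2) p)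
    (x y : ℝ) (hx : x ∈ I₁) (hy : y ∈ I₂) (f g : ℕ → ℝ)
    (hf : ∀ n, x ≤ f n) (hg : ∀ n, y ≤ g n)
    (hft : Filter.Tendsto f Filter.atTop (nhds x)) (hgt : Filter.Tendsto g Filter.atTop (nhds y)) :
    Filter.Tendsto (fun n => k (f n) (g n)) Filter.atTop (nhds (k x y)) := by
  have h := (hrc (x, y) ⟨hx, hy⟩).tendsto.comp (f := fun n => (f n, g n))
    (by
      rw [tendsto_nhdsWithin_iff]
      exact ⟨hft.prodMk_nhds hgt, Filter.Eventually.of_forall fun n => ⟨hf n, hg n⟩⟩)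
  exact h


/-- Optimal-transport inequality: for a superadditive, right-continuous unit-cost `k`
bounded below by `C` on `I₁ × I₂` (half-open intervals `[a,b)` with `b ≤ ∞`), the
comonotone coupling `(x̃₁(H), x̃₂(H))` (with `H` non-atomic and `x̃ᵢ` nondecreasing,
left-continuous, and distributed like `Xᵢ`) maximizes `E k(X₁, X₂)`; possibly infinite
expectations are expressed via lower integrals of `k − C`. -/
theorem superadditive_transport_inequality
    {Ω : Type*} [MeasurableSpace Ω] (P : Measure Ω) [IsProbabilityMeasure P]
    (I₁ I₂ : Set ℝ)
    (hI₁ : ∃ a : ℝ, I₁ = Set.Ici a ∨ ∃ b : ℝ, a < b ∧ I₁ = Set.Ico a b)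
    (hI₂ : ∃ a : ℝ, I₂ = Set.Ici a ∨ ∃ b : ℝ, a < b ∧ I₂ = Set.Ico a b)
    (X₁ X₂ : Ω → ℝ) (hX₁ : Measurable X₁) (hX₂ : Measurable X₂)
    (hX₁I : ∀ ω, X₁ ω ∈ I₁) (hX₂I : ∀ ω, X₂ ω ∈ I₂)
    (H : Ω → ℝ) (hH : Measurable H) (hHna : ∀ c : ℝ, P {ω | H ω = c} = 0)
    (x₁ x₂ : ℝ → ℝ) (hx₁mono : Monotone x₁) (hx₂mono : Monotone x₂)
    (hx₁lc : ∀ t : ℝ, ContinuousWithinAt x₁ (Set.Iic t) t)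
    (hx₂lc : ∀ t : ℝ, ContinuousWithinAt x₂ (Set.Iic t) t)
    (hx₁I : ∀ t : ℝ, x₁ t ∈ I₁) (hx₂I : ∀ t : ℝ, x₂ t ∈ I₂)
    (hd₁ : Measure.map (fun ω => x₁ (H ω)) P = Measure.map X₁ P)
    (hd₂ : Measure.map (fun ω => x₂ (H ω)) P = Measure.map X₂ P)
    (k : ℝ → ℝ → ℝ)
    (hsuper : ∀ a b c d : ℝ, a ∈ I₁ → b ∈ I₁ → c ∈ I₂ → d ∈ I₂ →
      a < b → c < d → k a d + k b c ≤ k a c + k b d)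
    (hrc : ∀ p : ℝ × ℝ, p ∈ I₁ ×ˢ I₂ →
      ContinuousWithinAt (fun q : ℝ × ℝ => k q.1 q.2) (Set.Ici p.1 ×ˢ Set.Ici p.2) p)
    (C : ℝ) (hkbdd : ∀ x ∈ I₁, ∀ y ∈ I₂, C ≤ k x y) :
    ∫⁻ ω, ENNReal.ofReal (k (X₁ ω) (X₂ ω) - C) ∂P
      ≤ ∫⁻ ω, ENNReal.ofReal (k (x₁ (H ω)) (x₂ (H ω)) - C) ∂P := by
  classical
  obtain ⟨a₁, ha₁I, ha₁le, hI₁dc, hI₁m, u, humono, humem, hucov⟩ := otiaux_interval I₁ hI₁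
  obtain ⟨a₂, ha₂I, ha₂le, hI₂dc, hI₂m, v, hvmono, hvmem, hvcov⟩ := otiaux_interval I₂ hI₂
  set g : ℝ → ℝ → ℝ := fun p q => k p q - k p a₂ - k a₁ q + k a₁ a₂ with hg
  have hXt1 : Measurable fun ω => x₁ (H ω) := hx₁mono.measurable.comp hH
  have hXt2 : Measurable fun ω => x₂ (H ω) := hx₂mono.measurable.comp hH
  -- basic facts about g
  have gzero1 : ∀ q, g a₁ q = 0 := fun q => by simp only [hg]; ring
  have gzero2 : ∀ p, g p a₂ = 0 := fun p => by simp only [hg]; ring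
  have gmono1 : ∀ x x' y, x ∈ I₁ → x' ∈ I₁ → y ∈ I₂ → x ≤ x' → g x y ≤ g x' y := by
    intro x x' y hx hx' hy hxx'
    rcases eq_or_lt_of_le hxx' with h | h
    · rw [h]
    rcases eq_or_lt_of_le (ha₂le y hy) with h2 | h2
    · rw [← h2, gzero2, gzero2]
    have := hsuper x x' a₂ y hx hx' ha₂I hy h h2
    simp only [hg]
    linarith
  have gmono2 : ∀ x y y', x ∈ I₁ → y ∈ I₂ → y' ∈ I₂ → y ≤ y' → g x y ≤ g x y' := by
    intro x y y' hx hy hy' hyy'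
    rcases eq_or_lt_of_le hyy' with h | h
    · rw [h]
    rcases eq_or_lt_of_le (ha₁le x hx) with h2 | h2
    · rw [← h2, gzero1, gzero1]
    have := hsuper a₁ x y y' ha₁I hx hy hy' h2 h
    simp only [hg]
    linarith
  have gmono : ∀ x x' y y', x ∈ I₁ → x' ∈ I₁ → y ∈ I₂ → y' ∈ I₂ → x ≤ x' → y ≤ y' →
      g x y ≤ g x' y' := fun x x' y y' hx hx' hy hy' h1 h2 =>
    le_trans (gmono1 x x' y hx hx' hy h1) (gmono2 x' y y' hx' hy hy' h2)
  have gnonneg : ∀ x ∈ I₁, ∀ y ∈ I₂, 0 ≤ g x y := fun x hx y hy =>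
    (gzero1 y) ▸ gmono1 a₁ x y ha₁I hx hy (ha₁le x hx)
  -- measurability of ofReal ∘ g ∘ (Z₁, Z₂)
  have MG : ∀ (Z₁ Z₂ : Ω → ℝ), Measurable Z₁ → Measurable Z₂ → (∀ ω, Z₁ ω ∈ I₁) →
      (∀ ω, Z₂ ω ∈ I₂) → Measurable fun ω => ENNReal.ofReal (g (Z₁ ω) (Z₂ ω)) := by
    intro Z₁ Z₂ h₁ h₂ m₁ m₂
    apply ENNReal.measurable_ofReal.comp
    have k1 := otiaux_meas I₁ I₂ k hrc Z₁ Z₂ h₁ h₂ m₁ m₂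
    have k2 := otiaux_meas I₁ I₂ k hrc Z₁ (fun _ => a₂) h₁ measurable_const m₁ (fun _ => ha₂I)
    have k3 := otiaux_meas I₁ I₂ k hrc (fun _ => a₁) Z₂ measurable_const h₂ (fun _ => ha₁I) m₂
    exact ((k1.sub k2).sub k3).add_const _
  -- the core inequality for g
  have core : ∫⁻ ω, ENNReal.ofReal (g (X₁ ω) (X₂ ω)) ∂P
      ≤ ∫⁻ ω, ENNReal.ofReal (g (x₁ (H ω)) (x₂ (H ω))) ∂P := by
    -- helper membership facts
    have hmin₁ : ∀ U, U ∈ I₁ → ∀ z, z ∈ I₁ → min z U ∈ I₁ := fun U hU z hz =>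
      hI₁dc z hz _ (le_min (ha₁le z hz) (ha₁le U hU)) (min_le_left _ _)
    have hmin₂ : ∀ V, V ∈ I₂ → ∀ z, z ∈ I₂ → min z V ∈ I₂ := fun V hV z hz =>
      hI₂dc z hz _ (le_min (ha₂le z hz) (ha₂le V hV)) (min_le_left _ _)
    -- the fixed-corner inequality
    have P3 : ∀ U, U ∈ I₁ → ∀ V, V ∈ I₂ →
        ∫⁻ ω, ENNReal.ofReal (g (min (X₁ ω) U) (min (X₂ ω) V)) ∂P
          ≤ ∫⁻ ω, ENNReal.ofReal (g (x₁ (H ω)) (x₂ (H ω))) ∂P := by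
      intro U hU V hV
      rcases eq_or_lt_of_le (ha₁le U hU) with h1 | h1
      · have hz : ∀ ω, ENNReal.ofReal (g (min (X₁ ω) U) (min (X₂ ω) V)) = 0 := by
          intro ω
          have hxu : U ≤ X₁ ω := h1 ▸ ha₁le _ (hX₁I ω)
          rw [min_eq_right hxu, ← h1, gzero1]
          simp
        rw [lintegral_congr hz]
        simp
      rcases eq_or_lt_of_le (ha₂le V hV) with h2 | h2
      · have hz : ∀ ω, ENNReal.ofReal (g (min (X₁ ω) U) (min (X₂ ω) V)) = 0 := by
          intro ω
          have hxv : V ≤ X₂ ω := h2 ▸ ha₂le _ (hX₂I ω)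
          rw [min_eq_right hxv, ← h2, gzero2]
          simp
        rw [lintegral_congr hz]
        simp
      -- main case : a₁ < U, a₂ < V
      have hSI₁ : ∀ (m : ℕ) (x : ℝ), a₁ ≤ x → otiS a₁ U m x ∈ I₁ := fun m x hx =>
        hI₁dc U hU _ (otiS_ge_a a₁ U x hx h1 m) (otiS_le_u a₁ U x hx h1 m)
      have hTI₂ : ∀ (m : ℕ) (y : ℝ), a₂ ≤ y → otiS a₂ V m y ∈ I₂ := fun m y hy =>
        hI₂dc V hV _ (otiS_ge_a a₂ V y hy h2 m) (otiS_le_u a₂ V y hy h2 m)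
      -- grid inequality
      have GI : ∀ n : ℕ,
          ∫⁻ ω, ENNReal.ofReal (g (otiS a₁ U n (X₁ ω)) (otiS a₂ V n (X₂ ω))) ∂P ≤
          ∫⁻ ω, ENNReal.ofReal (g (otiS a₁ U n (x₁ (H ω))) (otiS a₂ V n (x₂ (H ω)))) ∂P := by
        intro n
        set N := 2 ^ n with hN
        set δ := (U - a₁) / 2 ^ n with hδ
        set ε := (V - a₂) / 2 ^ n with hε
        set s : ℕ → ℝ := fun i => a₁ + i * δ with hs
        set t : ℕ → ℝ := fun j => a₂ + j * ε with ht
        have hδpos : 0 < δ := otiS_delta_pos a₁ U h1 n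
        have hεpos : 0 < ε := otiS_delta_pos a₂ V h2 n
        have hNδ : (N : ℝ) * δ = U - a₁ := by
          rw [hN, hδ]
          push_cast
          field_simp
        have hNε : (N : ℝ) * ε = V - a₂ := by
          rw [hN, hε]
          push_cast
          field_simp
        have hsmem : ∀ i, i ≤ N → s i ∈ I₁ := by
          intro i hi
          apply hI₁dc U hU
          · have h0 : (0:ℝ) ≤ (i:ℝ) * δ := by positivity
            simp only [hs]
            linarith
          · have hiN : (i:ℝ) ≤ (N:ℝ) := Nat.cast_le.mpr hi
            have hle : (i:ℝ) * δ ≤ (N:ℝ) * δ := mul_le_mul_of_nonneg_right hiN hδpos.le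
            simp only [hs]
            linarith
        have htmem : ∀ j, j ≤ N → t j ∈ I₂ := by
          intro j hj
          apply hI₂dc V hV
          · have h0 : (0:ℝ) ≤ (j:ℝ) * ε := by positivity
            simp only [ht]
            linarith
          · have hjN : (j:ℝ) ≤ (N:ℝ) := Nat.cast_le.mpr hj
            have hle : (j:ℝ) * ε ≤ (N:ℝ) * ε := mul_le_mul_of_nonneg_right hjN hεpos.le
            simp only [ht]
            linarith
        have hslt : ∀ i : ℕ, s i < s (i + 1) := by
          intro i
          simp only [hs]
          push_cast
          nlinarith [hδpos]
        have htlt : ∀ j : ℕ, t j < t (j + 1) := by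
          intro j
          simp only [ht]
          push_cast
          nlinarith [hεpos]
        set Δ : ℕ → ℕ → ℝ := fun i j =>
          k (s (i+1)) (t (j+1)) - k (s i) (t (j+1)) - k (s (i+1)) (t j) + k (s i) (t j)
          with hΔdef
        have hΔ : ∀ i, i < N → ∀ j, j < N → 0 ≤ Δ i j := by
          intro i hi j hj
          have := hsuper (s i) (s (i+1)) (t j) (t (j+1)) (hsmem i hi.le) (hsmem _ hi)
            (htmem j hj.le) (htmem _ hj) (hslt i) (htlt j)
          simp only [hΔdef]
          linarith
        -- key combinatorial identity
        have KI : ∀ x, a₁ ≤ x → ∀ y, a₂ ≤ y →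
            g (otiS a₁ U n x) (otiS a₂ V n y) =
              ∑ i ∈ Finset.range N, ∑ j ∈ Finset.range N,
                (if s i < x ∧ t j < y then Δ i j else 0) := by
          intro x hx y hy
          set i₀ := ⌈(min x U - a₁) / δ⌉₊ with hi₀
          set j₀ := ⌈(min y V - a₂) / ε⌉₊ with hj₀
          have hi₀N : i₀ ≤ N := by
            rw [hi₀, hδ, hN]
            exact otiS_ceil_le a₁ U x hx h1 n
          have hj₀N : j₀ ≤ N := by
            rw [hj₀, hε, hN]
            exact otiS_ceil_le a₂ V y hy h2 n
          have step1 : ∀ i ∈ Finset.range N, ∀ j ∈ Finset.range N,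
              (if s i < x ∧ t j < y then Δ i j else 0) =
                (if i < i₀ then (if j < j₀ then Δ i j else 0) else 0) := by
            intro i hi j hj
            rw [Finset.mem_range] at hi hj
            have e1 : s i < x ↔ i < i₀ := by
              rw [hi₀, hδ]
              exact otiS_lt_iff a₁ U x hx h1 n i (hN ▸ hi)
            have e2 : t j < y ↔ j < j₀ := by
              rw [hj₀, hε]
              exact otiS_lt_iff a₂ V y hy h2 n j (hN ▸ hj)
            rw [if_congr (and_congr e1 e2) rfl rfl, ite_and]
          rw [Finset.sum_congr rfl fun i hi => Finset.sum_congr rfl fun j hj => step1 i hi j hj]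
          have step2 : ∀ i ∈ Finset.range N,
              (∑ j ∈ Finset.range N, if i < i₀ then (if j < j₀ then Δ i j else 0) else 0)
                = (if i < i₀ then ∑ j ∈ Finset.range j₀, Δ i j else 0) := by
            intro i _
            by_cases h : i < i₀
            · simp only [h, if_true]
              exact otiaux_sum_if_lt N j₀ hj₀N _
            · simp only [h, if_false, Finset.sum_const_zero]
          rw [Finset.sum_congr rfl step2, otiaux_sum_if_lt N i₀ hi₀N]
          have inner : ∀ i : ℕ, (∑ j ∈ Finset.range j₀, Δ i j)
              = (k (s (i+1)) (t j₀) - k (s (i+1)) (t 0))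
                - (k (s i) (t j₀) - k (s i) (t 0)) := by
            intro i
            have e : ∀ j : ℕ, Δ i j = (k (s (i+1)) (t (j+1)) - k (s i) (t (j+1)))
                - (k (s (i+1)) (t j) - k (s i) (t j)) := by
              intro j
              simp only [hΔdef]
              ring
            have tel : (∑ j ∈ Finset.range j₀, ((k (s (i+1)) (t (j+1)) - k (s i) (t (j+1)))
                - (k (s (i+1)) (t j) - k (s i) (t j))))
                  = (k (s (i+1)) (t j₀) - k (s i) (t j₀))
                    - (k (s (i+1)) (t 0) - k (s i) (t 0)) :=
              Finset.sum_range_sub (fun j' => k (s (i+1)) (t j') - k (s i) (t j')) j₀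
            rw [Finset.sum_congr rfl fun j _ => e j, tel]
            ring
          have tel2 : (∑ i ∈ Finset.range i₀, ((k (s (i+1)) (t j₀) - k (s (i+1)) (t 0))
              - (k (s i) (t j₀) - k (s i) (t 0))))
                = (k (s i₀) (t j₀) - k (s i₀) (t 0)) - (k (s 0) (t j₀) - k (s 0) (t 0)) :=
            Finset.sum_range_sub (fun i' => k (s i') (t j₀) - k (s i') (t 0)) i₀
          rw [Finset.sum_congr rfl fun i _ => inner i, tel2]
          have hs0 : s 0 = a₁ := by simp [hs]
          have ht0 : t 0 = a₂ := by simp [ht]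
          have hSx : otiS a₁ U n x = s i₀ := by
            simp only [otiS, hs, hi₀, ← hδ, ← hN]
          have hTy : otiS a₂ V n y = t j₀ := by
            simp only [otiS, ht, hj₀, ← hε, ← hN]
          rw [hSx, hTy]
          simp only [hs0, ht0, hg]
          ring
        -- sum representation of the lower integral
        have SUMEQ : ∀ (Z₁ Z₂ : Ω → ℝ), Measurable Z₁ → Measurable Z₂ →
            (∀ ω, Z₁ ω ∈ I₁) → (∀ ω, Z₂ ω ∈ I₂) →
            ∫⁻ ω, ENNReal.ofReal (g (otiS a₁ U n (Z₁ ω)) (otiS a₂ V n (Z₂ ω))) ∂P =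
              ∑ i ∈ Finset.range N, ∑ j ∈ Finset.range N,
                ENNReal.ofReal (Δ i j) * P ({ω | s i < Z₁ ω} ∩ {ω | t j < Z₂ ω}) := by
          intro Z₁ Z₂ hZ₁ hZ₂ hZ₁I hZ₂I
          have ptw : ∀ ω, ENNReal.ofReal (g (otiS a₁ U n (Z₁ ω)) (otiS a₂ V n (Z₂ ω))) =
              ∑ i ∈ Finset.range N, ∑ j ∈ Finset.range N,
                (if s i < Z₁ ω ∧ t j < Z₂ ω then ENNReal.ofReal (Δ i j) else 0) := by
            intro ω
            rw [KI (Z₁ ω) (ha₁le _ (hZ₁I ω)) (Z₂ ω) (ha₂le _ (hZ₂I ω))]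
            rw [ENNReal.ofReal_sum_of_nonneg]
            · apply Finset.sum_congr rfl
              intro i hi
              rw [ENNReal.ofReal_sum_of_nonneg]
              · apply Finset.sum_congr rfl
                intro j hj
                split_ifs with h
                · rfl
                · exact ENNReal.ofReal_zero
              · intro j hj
                split_ifs with h
                · exact hΔ i (Finset.mem_range.mp hi) j (Finset.mem_range.mp hj)
                · exact le_refl 0
            · intro i hi
              apply Finset.sum_nonneg
              intro j hj
              split_ifs with h
              · exact hΔ i (Finset.mem_range.mp hi) j (Finset.mem_range.mp hj)
              · exact le_refl 0
          have hmsij : ∀ (i j : ℕ), MeasurableSet ({ω | s i < Z₁ ω} ∩ {ω | t j < Z₂ ω}) :=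
            fun i j => (measurableSet_lt measurable_const hZ₁).inter
              (measurableSet_lt measurable_const hZ₂)
          have hterm : ∀ (i j : ℕ), (fun ω => if s i < Z₁ ω ∧ t j < Z₂ ω
              then ENNReal.ofReal (Δ i j) else 0) =
              ({ω | s i < Z₁ ω} ∩ {ω | t j < Z₂ ω}).indicator
                (fun _ => ENNReal.ofReal (Δ i j)) := by
            intro i j
            funext ω
            by_cases h : s i < Z₁ ω ∧ t j < Z₂ ω
            · have hmem : ω ∈ ({ω | s i < Z₁ ω} ∩ {ω | t j < Z₂ ω}) := ⟨h.1, h.2⟩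
              rw [if_pos h, Set.indicator_of_mem hmem]
            · have hmem : ω ∉ ({ω | s i < Z₁ ω} ∩ {ω | t j < Z₂ ω}) := fun hm => h ⟨hm.1, hm.2⟩
              rw [if_neg h, Set.indicator_of_notMem hmem]
          have htermmeas : ∀ (i j : ℕ), Measurable (fun ω => if s i < Z₁ ω ∧ t j < Z₂ ω
              then ENNReal.ofReal (Δ i j) else 0) := by
            intro i j
            rw [hterm i j]
            exact (measurable_const.indicator (hmsij i j))
          rw [lintegral_congr ptw, lintegral_finset_sum _
            (fun i _ => Finset.measurable_sum _ fun j _ => htermmeas i j)]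
          apply Finset.sum_congr rfl
          intro i _
          rw [lintegral_finset_sum _ (fun j _ => htermmeas i j)]
          apply Finset.sum_congr rfl
          intro j _
          rw [lintegral_congr fun ω => congrFun (hterm i j) ω]
          exact lintegral_indicator_const (hmsij i j) _
        rw [SUMEQ X₁ X₂ hX₁ hX₂ hX₁I hX₂I,
          SUMEQ _ _ hXt1 hXt2 (fun ω => hx₁I _) (fun ω => hx₂I _)]
        apply Finset.sum_le_sum
        intro i _
        apply Finset.sum_le_sum
        intro j _
        apply mul_le_mul_right
        have mar1' : P {ω | s i < X₁ ω} = P {ω | s i < x₁ (H ω)} := by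
          have e1 := congrArg (fun μ : Measure ℝ => μ (Set.Ioi (s i))) hd₁
          rw [Measure.map_apply hXt1 measurableSet_Ioi,
            Measure.map_apply hX₁ measurableSet_Ioi] at e1
          exact e1.symm
        have mar2' : P {ω | t j < X₂ ω} = P {ω | t j < x₂ (H ω)} := by
          have e1 := congrArg (fun μ : Measure ℝ => μ (Set.Ioi (t j))) hd₂
          rw [Measure.map_apply hXt2 measurableSet_Ioi,
            Measure.map_apply hX₂ measurableSet_Ioi] at e1
          exact e1.symm
        rcases otiaux_upset {h | s i < x₁ h} {h | t j < x₂ h}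
            (fun p hp q hpq => lt_of_lt_of_le hp (hx₁mono hpq))
            (fun p hp q hpq => lt_of_lt_of_le hp (hx₂mono hpq)) with hAB | hBA
        · have hss : {ω | s i < x₁ (H ω)} ⊆ {ω | t j < x₂ (H ω)} := fun ω hω => hAB hω
          calc P ({ω | s i < X₁ ω} ∩ {ω | t j < X₂ ω})
              ≤ P {ω | s i < X₁ ω} := measure_mono Set.inter_subset_left
            _ = P {ω | s i < x₁ (H ω)} := mar1'
            _ = P ({ω | s i < x₁ (H ω)} ∩ {ω | t j < x₂ (H ω)}) := by
                rw [Set.inter_eq_left.mpr hss]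
        · have hss : {ω | t j < x₂ (H ω)} ⊆ {ω | s i < x₁ (H ω)} := fun ω hω => hBA hω
          calc P ({ω | s i < X₁ ω} ∩ {ω | t j < X₂ ω})
              ≤ P {ω | t j < X₂ ω} := measure_mono Set.inter_subset_right
            _ = P {ω | t j < x₂ (H ω)} := mar2'
            _ = P ({ω | s i < x₁ (H ω)} ∩ {ω | t j < x₂ (H ω)}) := by
                rw [Set.inter_eq_right.mpr hss]
      -- lower bound at the grid level
      have h1chain : ∀ m : ℕ,
          (∫⁻ ω, ENNReal.ofReal (g (min (X₁ ω) U) (min (X₂ ω) V)) ∂P)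
            ≤ ∫⁻ ω, ENNReal.ofReal (g (otiS a₁ U m (X₁ ω)) (otiS a₂ V m (X₂ ω))) ∂P := by
        intro m
        apply lintegral_mono
        intro ω
        apply ENNReal.ofReal_le_ofReal
        exact gmono _ _ _ _ (hmin₁ U hU _ (hX₁I ω)) (hSI₁ m _ (ha₁le _ (hX₁I ω)))
          (hmin₂ V hV _ (hX₂I ω)) (hTI₂ m _ (ha₂le _ (hX₂I ω)))
          (otiS_ge a₁ U _ (ha₁le _ (hX₁I ω)) h1 m) (otiS_ge a₂ V _ (ha₂le _ (hX₂I ω)) h2 m)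
      have hmeasn : ∀ m : ℕ, Measurable fun ω =>
          ENNReal.ofReal (g (otiS a₁ U m (x₁ (H ω))) (otiS a₂ V m (x₂ (H ω)))) := fun m =>
        MG _ _ ((otiS_measurable a₁ U m).comp hXt1) ((otiS_measurable a₂ V m).comp hXt2)
          (fun ω => hSI₁ m _ (ha₁le _ (hx₁I _))) (fun ω => hTI₂ m _ (ha₂le _ (hx₂I _)))
      have hanti : Antitone fun m => (fun ω =>
          ENNReal.ofReal (g (otiS a₁ U m (x₁ (H ω))) (otiS a₂ V m (x₂ (H ω))))) := by
        intro m m' hmm' ω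
        apply ENNReal.ofReal_le_ofReal
        exact gmono _ _ _ _ (hSI₁ m' _ (ha₁le _ (hx₁I _))) (hSI₁ m _ (ha₁le _ (hx₁I _)))
          (hTI₂ m' _ (ha₂le _ (hx₂I _))) (hTI₂ m _ (ha₂le _ (hx₂I _)))
          (otiS_anti a₁ U _ (ha₁le _ (hx₁I _)) h1 hmm')
          (otiS_anti a₂ V _ (ha₂le _ (hx₂I _)) h2 hmm')
      have fin0 : (∫⁻ ω, ENNReal.ofReal
          (g (otiS a₁ U 0 (x₁ (H ω))) (otiS a₂ V 0 (x₂ (H ω)))) ∂P) ≠ ⊤ := by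
        have hb : (∫⁻ ω, ENNReal.ofReal
            (g (otiS a₁ U 0 (x₁ (H ω))) (otiS a₂ V 0 (x₂ (H ω)))) ∂P)
              ≤ ENNReal.ofReal (g U V) := by
          have : ∀ ω, ENNReal.ofReal (g (otiS a₁ U 0 (x₁ (H ω))) (otiS a₂ V 0 (x₂ (H ω))))
              ≤ ENNReal.ofReal (g U V) := by
            intro ω
            apply ENNReal.ofReal_le_ofReal
            exact gmono _ _ _ _ (hSI₁ 0 _ (ha₁le _ (hx₁I _))) hU
              (hTI₂ 0 _ (ha₂le _ (hx₂I _))) hV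
              (otiS_le_u a₁ U _ (ha₁le _ (hx₁I _)) h1 0)
              (otiS_le_u a₂ V _ (ha₂le _ (hx₂I _)) h2 0)
          calc (∫⁻ ω, ENNReal.ofReal
              (g (otiS a₁ U 0 (x₁ (H ω))) (otiS a₂ V 0 (x₂ (H ω)))) ∂P)
              ≤ ∫⁻ _, ENNReal.ofReal (g U V) ∂P := lintegral_mono this
            _ = ENNReal.ofReal (g U V) := by
                rw [lintegral_const, measure_univ, mul_one]
        exact ne_top_of_le_ne_top ENNReal.ofReal_ne_top hb
      have h3 : (⨅ m : ℕ, ∫⁻ ω, ENNReal.ofReal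
          (g (otiS a₁ U m (x₁ (H ω))) (otiS a₂ V m (x₂ (H ω)))) ∂P)
            ≤ ∫⁻ ω, ENNReal.ofReal (g (x₁ (H ω)) (x₂ (H ω))) ∂P := by
        rw [← lintegral_iInf hmeasn hanti fin0]
        apply lintegral_mono
        intro ω
        have hxm : a₁ ≤ x₁ (H ω) := ha₁le _ (hx₁I _)
        have hym : a₂ ≤ x₂ (H ω) := ha₂le _ (hx₂I _)
        have hmem1 : min (x₁ (H ω)) U ∈ I₁ := hmin₁ U hU _ (hx₁I _)
        have hmem2 : min (x₂ (H ω)) V ∈ I₂ := hmin₂ V hV _ (hx₂I _)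
        have hiq : (⨅ m : ℕ, ENNReal.ofReal
            (g (otiS a₁ U m (x₁ (H ω))) (otiS a₂ V m (x₂ (H ω)))))
              = ENNReal.ofReal (g (min (x₁ (H ω)) U) (min (x₂ (H ω)) V)) := by
          have hanti' : Antitone fun m => ENNReal.ofReal
              (g (otiS a₁ U m (x₁ (H ω))) (otiS a₂ V m (x₂ (H ω)))) :=
            fun m m' hmm' => hanti hmm' ω
          have t1 := otiaux_tendsto_pair hrc (min (x₁ (H ω)) U) (min (x₂ (H ω)) V) hmem1 hmem2
            (fun m => otiS a₁ U m (x₁ (H ω))) (fun m => otiS a₂ V m (x₂ (H ω)))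
            (fun m => otiS_ge a₁ U _ hxm h1 m) (fun m => otiS_ge a₂ V _ hym h2 m)
            (otiS_tendsto a₁ U _ hxm h1) (otiS_tendsto a₂ V _ hym h2)
          have t2 := otiaux_tendsto_pair hrc (min (x₁ (H ω)) U) a₂ hmem1 ha₂I
            (fun m => otiS a₁ U m (x₁ (H ω))) (fun _ => a₂)
            (fun m => otiS_ge a₁ U _ hxm h1 m) (fun m => le_refl a₂)
            (otiS_tendsto a₁ U _ hxm h1) tendsto_const_nhds
          have t3 := otiaux_tendsto_pair hrc a₁ (min (x₂ (H ω)) V) ha₁I hmem2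
            (fun _ => a₁) (fun m => otiS a₂ V m (x₂ (H ω)))
            (fun m => le_refl a₁) (fun m => otiS_ge a₂ V _ hym h2 m)
            tendsto_const_nhds (otiS_tendsto a₂ V _ hym h2)
          have treal : Filter.Tendsto (fun m =>
              g (otiS a₁ U m (x₁ (H ω))) (otiS a₂ V m (x₂ (H ω)))) Filter.atTop
              (nhds (g (min (x₁ (H ω)) U) (min (x₂ (H ω)) V))) := by
            simp only [hg]
            exact ((t1.sub t2).sub t3).add tendsto_const_nhds
          exact tendsto_nhds_unique (tendsto_atTop_iInf hanti')
            ((ENNReal.continuous_ofReal.tendsto _).comp treal)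
        refine le_trans (le_of_eq ?_) (ENNReal.ofReal_le_ofReal
          (gmono _ _ _ _ hmem1 (hx₁I _) hmem2 (hx₂I _) (min_le_left _ _) (min_le_left _ _)))
        exact hiq
      exact le_trans (le_iInf fun m => le_trans (h1chain m) (GI m)) h3
    -- exhaust I₁ × I₂ by corners
    have meas_m : ∀ m : ℕ, Measurable fun ω =>
        ENNReal.ofReal (g (min (X₁ ω) (u m)) (min (X₂ ω) (v m))) := fun m =>
      MG _ _ (hX₁.min measurable_const) (hX₂.min measurable_const)
        (fun ω => hmin₁ (u m) (humem m) _ (hX₁I ω)) (fun ω => hmin₂ (v m) (hvmem m) _ (hX₂I ω))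
    have mono_m : Monotone fun m => (fun ω =>
        ENNReal.ofReal (g (min (X₁ ω) (u m)) (min (X₂ ω) (v m)))) := by
      intro m m' hmm' ω
      apply ENNReal.ofReal_le_ofReal
      exact gmono _ _ _ _ (hmin₁ (u m) (humem m) _ (hX₁I ω)) (hmin₁ (u m') (humem m') _ (hX₁I ω))
        (hmin₂ (v m) (hvmem m) _ (hX₂I ω)) (hmin₂ (v m') (hvmem m') _ (hX₂I ω))
        (min_le_min (le_refl _) (humono hmm')) (min_le_min (le_refl _) (hvmono hmm'))
    have P4 : ∫⁻ ω, ENNReal.ofReal (g (X₁ ω) (X₂ ω)) ∂P =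
        ⨆ m : ℕ, ∫⁻ ω, ENNReal.ofReal (g (min (X₁ ω) (u m)) (min (X₂ ω) (v m))) ∂P := by
      rw [← lintegral_iSup meas_m mono_m]
      apply lintegral_congr
      intro ω
      apply le_antisymm
      · obtain ⟨m₁, hm₁⟩ := hucov _ (hX₁I ω)
        obtain ⟨m₂, hm₂⟩ := hvcov _ (hX₂I ω)
        refine le_trans (le_of_eq ?_) (le_iSup _ (max m₁ m₂))
        rw [min_eq_left (le_trans hm₁ (humono (le_max_left m₁ m₂))),
          min_eq_left (le_trans hm₂ (hvmono (le_max_right m₁ m₂)))]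
      · apply iSup_le
        intro m
        apply ENNReal.ofReal_le_ofReal
        exact gmono _ _ _ _ (hmin₁ (u m) (humem m) _ (hX₁I ω)) (hX₁I ω)
          (hmin₂ (v m) (hvmem m) _ (hX₂I ω)) (hX₂I ω) (min_le_left _ _) (min_le_left _ _)
    rw [P4]
    exact iSup_le fun m => P3 (u m) (humem m) (v m) (hvmem m)

  -- expansion of the integrals
  have c₀nonneg : (0:ℝ) ≤ k a₁ a₂ - C := by linarith [hkbdd a₁ ha₁I a₂ ha₂I]
  have expand : ∀ (Z₁ Z₂ : Ω → ℝ), Measurable Z₁ → Measurable Z₂ → (∀ ω, Z₁ ω ∈ I₁) →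
      (∀ ω, Z₂ ω ∈ I₂) →
      (∫⁻ ω, ENNReal.ofReal (k (Z₁ ω) (Z₂ ω) - C) ∂P) + ENNReal.ofReal (k a₁ a₂ - C) =
        (∫⁻ ω, ENNReal.ofReal (g (Z₁ ω) (Z₂ ω)) ∂P) +
        (∫⁻ ω, ENNReal.ofReal (k (Z₁ ω) a₂ - C) ∂P) +
        (∫⁻ ω, ENNReal.ofReal (k a₁ (Z₂ ω) - C) ∂P) := by
    intro Z₁ Z₂ h₁ h₂ m₁ m₂
    have e1 : (∫⁻ ω, ENNReal.ofReal (k (Z₁ ω) (Z₂ ω) - C) ∂P) + ENNReal.ofReal (k a₁ a₂ - C) =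
        ∫⁻ ω, (ENNReal.ofReal (k (Z₁ ω) (Z₂ ω) - C) + ENNReal.ofReal (k a₁ a₂ - C)) ∂P := by
      rw [lintegral_add_right _ measurable_const, lintegral_const, measure_univ, mul_one]
    rw [e1]
    have e2 : ∀ ω, ENNReal.ofReal (k (Z₁ ω) (Z₂ ω) - C) + ENNReal.ofReal (k a₁ a₂ - C) =
        ENNReal.ofReal (g (Z₁ ω) (Z₂ ω)) +
          (ENNReal.ofReal (k (Z₁ ω) a₂ - C) + ENNReal.ofReal (k a₁ (Z₂ ω) - C)) := by
      intro ω
      have h3 : 0 ≤ k (Z₁ ω) (Z₂ ω) - C := by linarith [hkbdd _ (m₁ ω) _ (m₂ ω)]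
      have h4 : 0 ≤ k (Z₁ ω) a₂ - C := by linarith [hkbdd _ (m₁ ω) a₂ ha₂I]
      have h5 : 0 ≤ k a₁ (Z₂ ω) - C := by linarith [hkbdd a₁ ha₁I _ (m₂ ω)]
      have h6 := gnonneg _ (m₁ ω) _ (m₂ ω)
      rw [← ENNReal.ofReal_add h3 c₀nonneg, ← ENNReal.ofReal_add h4 h5,
        ← ENNReal.ofReal_add h6 (by linarith)]
      congr 1
      simp only [hg]
      ring
    rw [lintegral_congr e2, lintegral_add_left (MG Z₁ Z₂ h₁ h₂ m₁ m₂),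
      lintegral_add_left, ← add_assoc]
    exact ENNReal.measurable_ofReal.comp
      ((otiaux_meas I₁ I₂ k hrc Z₁ (fun _ => a₂) h₁ measurable_const m₁ (fun _ => ha₂I)).sub
        measurable_const)
  -- marginal equalities
  have mar1 : ∫⁻ ω, ENNReal.ofReal (k (X₁ ω) a₂ - C) ∂P
      = ∫⁻ ω, ENNReal.ofReal (k (x₁ (H ω)) a₂ - C) ∂P := by
    set ρ : ℝ → ℝ := fun x => if x ∈ I₁ then x else a₁ with hρ
    have hρm : Measurable ρ := Measurable.ite hI₁m measurable_id measurable_const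
    have hρI : ∀ x, ρ x ∈ I₁ := fun x => by
      by_cases h : x ∈ I₁ <;> simp [hρ, h, ha₁I]
    have hφ : Measurable fun x : ℝ => ENNReal.ofReal (k (ρ x) a₂ - C) :=
      ENNReal.measurable_ofReal.comp
        ((otiaux_meas I₁ I₂ k hrc ρ (fun _ => a₂) hρm measurable_const hρI
          (fun _ => ha₂I)).sub measurable_const)
    have key : ∀ (Z : Ω → ℝ), Measurable Z → (∀ ω, Z ω ∈ I₁) →
        ∫⁻ ω, ENNReal.ofReal (k (Z ω) a₂ - C) ∂P
          = ∫⁻ x, ENNReal.ofReal (k (ρ x) a₂ - C) ∂(Measure.map Z P) := by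
      intro Z hZ hZI
      rw [lintegral_map hφ hZ]
      exact lintegral_congr fun ω => by rw [show ρ (Z ω) = Z ω from if_pos (hZI ω)]
    rw [key X₁ hX₁ hX₁I, key _ hXt1 (fun ω => hx₁I _), hd₁]
  have mar2 : ∫⁻ ω, ENNReal.ofReal (k a₁ (X₂ ω) - C) ∂P
      = ∫⁻ ω, ENNReal.ofReal (k a₁ (x₂ (H ω)) - C) ∂P := by
    set ρ : ℝ → ℝ := fun x => if x ∈ I₂ then x else a₂ with hρ
    have hρm : Measurable ρ := Measurable.ite hI₂m measurable_id measurable_const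
    have hρI : ∀ x, ρ x ∈ I₂ := fun x => by
      by_cases h : x ∈ I₂ <;> simp [hρ, h, ha₂I]
    have hφ : Measurable fun x : ℝ => ENNReal.ofReal (k a₁ (ρ x) - C) :=
      ENNReal.measurable_ofReal.comp
        ((otiaux_meas I₁ I₂ k hrc (fun _ => a₁) ρ measurable_const hρm (fun _ => ha₁I)
          hρI).sub measurable_const)
    have key : ∀ (Z : Ω → ℝ), Measurable Z → (∀ ω, Z ω ∈ I₂) →
        ∫⁻ ω, ENNReal.ofReal (k a₁ (Z ω) - C) ∂P
          = ∫⁻ x, ENNReal.ofReal (k a₁ (ρ x) - C) ∂(Measure.map Z P) := by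
      intro Z hZ hZI
      rw [lintegral_map hφ hZ]
      exact lintegral_congr fun ω => by rw [show ρ (Z ω) = Z ω from if_pos (hZI ω)]
    rw [key X₂ hX₂ hX₂I, key _ hXt2 (fun ω => hx₂I _), hd₂]
  -- assembly
  have E1 := expand X₁ X₂ hX₁ hX₂ hX₁I hX₂I
  have E2 := expand _ _ hXt1 hXt2 (fun ω => hx₁I _) (fun ω => hx₂I _)
  rw [← ENNReal.add_le_add_iff_right (a := ENNReal.ofReal (k a₁ a₂ - C))
    ENNReal.ofReal_ne_top, E1, E2, mar1, mar2]
  exact add_le_add_left (add_le_add_left core _) _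
end
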